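/- arXiv:math/0607446 — 9 statements merged into one kernel-verified Lean document; each statement's English description precedes it below -/
import Mathlib

section
/- If f : (a,b) → ℝ is C^∞ and the function r ↦ f(r²) is completely monotonic on (a,b) with 0 < a < b, then f is completely monotonic on (a²,b²). -/
open Set

/-- If `f` is `C^∞` and `r ↦ f (r^2)` is completely monotonic on `(a, b)` with `0 < a < b`,
then `f` is completely monotonic on `(a^2, b^2)`. -/
theorem stmt_0 (a b : ℝ) (ha : 0 < a) (hab : a < b) (f : ℝ → ℝ)
    (hf : ContDiffOn ℝ (⊤ : ℕ∞) f (Ioo (a ^ 2) (b ^ 2)))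
    (hcm : ∀ k : ℕ, ∀ r ∈ Ioo a b,
      0 ≤ (-1 : ℝ) ^ k * iteratedDerivWithin k (fun r => f (r ^ 2)) (Ioo a b) r) :
    ∀ k : ℕ, ∀ x ∈ Ioo (a ^ 2) (b ^ 2),
      0 ≤ (-1 : ℝ) ^ k * iteratedDerivWithin k f (Ioo (a ^ 2) (b ^ 2)) x := by
  set s : Set ℝ := Ioo (a ^ 2) (b ^ 2) with hs_def
  set t : Set ℝ := Ioo a b with ht_def
  set g : ℝ → ℝ := fun r => f (r ^ 2) with hg_def
  have hs : IsOpen s := isOpen_Ioo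
  have ht : IsOpen t := isOpen_Ioo
  have hmap : ∀ r ∈ t, r ^ 2 ∈ s := by
    rintro r ⟨h1, h2⟩
    exact ⟨by nlinarith, by nlinarith⟩
  have hg : ContDiffOn ℝ (⊤ : ℕ∞) g t := by
    exact hf.comp ((contDiff_id.pow 2).contDiffOn) hmap
  -- derivative of iterated derivatives, on open sets
  have hasD : ∀ (u : Set ℝ) (hu : IsOpen u) (h : ℝ → ℝ), ContDiffOn ℝ (⊤ : ℕ∞) h u →
      ∀ (k : ℕ), ∀ x ∈ u, HasDerivAt (iteratedDerivWithin k h u)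
        (iteratedDerivWithin (k + 1) h u x) x := by
    intro u hu h hh k x hx
    have hd : DifferentiableOn ℝ (iteratedDerivWithin k h u) u :=
      hh.differentiableOn_iteratedDerivWithin (by exact_mod_cast lt_top_iff_ne_top.2 (by simp))
        hu.uniqueDiffOn
    have hda : DifferentiableAt ℝ (iteratedDerivWithin k h u) x :=
      (hd x hx).differentiableAt (hu.mem_nhds hx)
    have h2 : iteratedDerivWithin (k + 1) h u x = deriv (iteratedDerivWithin k h u) x := by
      rw [iteratedDerivWithin_succ, derivWithin_of_isOpen hu hx]
    rw [h2]
    exact hda.hasDerivAt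
  have hF := hasD s hs f hf
  have hG := hasD t ht g hg
  have key : ∀ k : ℕ, ∃ c : ℕ → ℝ, (∀ j, 0 ≤ c j) ∧ (∀ j, k < j → c j = 0) ∧
      ∀ r ∈ t, iteratedDerivWithin k f s (r ^ 2) * r ^ (2 * k + 1) =
        ∑ j ∈ Finset.range (k + 1),
          ((-1 : ℝ) ^ (k + j) * c j) * (iteratedDerivWithin j g t r * r ^ (j + 1)) := by
    intro k
    induction k with
    | zero =>
      refine ⟨fun j => if j = 0 then 1 else 0, ?_, ?_, ?_⟩
      · intro j; dsimp only; split_ifs <;> norm_num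
      · intro j hj; dsimp only; rw [if_neg (by omega)]
      · intro r hr
        simp [iteratedDerivWithin_zero, hg_def]
    | succ k ih =>
      obtain ⟨c, hc0, hcz, hceq⟩ := ih
      refine ⟨fun j => (if j = 0 then 0 else c (j - 1) / 2) + c j * ((2 * k : ℝ) - j) / 2,
        ?_, ?_, ?_⟩
      · intro j
        dsimp only
        have h1 : (0 : ℝ) ≤ (if j = 0 then 0 else c (j - 1) / 2) := by
          split_ifs
          · exact le_refl 0
          · exact div_nonneg (hc0 _) (by norm_num)
        rcases le_or_gt j k with hj | hj
        · have h2 : (0 : ℝ) ≤ c j * ((2 * k : ℝ) - j) / 2 := by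
            have hjk : (j : ℝ) ≤ k := by exact_mod_cast hj
            have hk0 : (0 : ℝ) ≤ k := Nat.cast_nonneg k
            have := hc0 j
            nlinarith
          linarith
        · rw [hcz j hj]
          simpa using h1
      · intro j hj
        dsimp only
        rw [hcz (j - 1) (by omega), hcz j (by omega), if_neg (by omega)]
        simp
      · intro r hr
        have hr0 : 0 < r := lt_trans ha hr.1
        -- the two functions agree near r
        have hEq : (fun ρ => iteratedDerivWithin k f s (ρ ^ 2) * ρ ^ (2 * k + 1)) =ᶠ[nhds r]
            (fun ρ => ∑ j ∈ Finset.range (k + 1),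
              ((-1 : ℝ) ^ (k + j) * c j) * (iteratedDerivWithin j g t ρ * ρ ^ (j + 1))) := by
          filter_upwards [ht.mem_nhds hr] with ρ hρ using hceq ρ hρ
        -- derivative of LHS
        have hL : HasDerivAt (fun ρ => iteratedDerivWithin k f s (ρ ^ 2) * ρ ^ (2 * k + 1))
            (iteratedDerivWithin (k + 1) f s (r ^ 2) * (2 * r) * r ^ (2 * k + 1) +
             iteratedDerivWithin k f s (r ^ 2) * ((2 * (k : ℝ) + 1) * r ^ (2 * k))) r := by
          have hsq : HasDerivAt (fun ρ : ℝ => ρ ^ 2) (2 * r) r := by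
            simpa using hasDerivAt_pow 2 r
          have hcomp := HasDerivAt.comp (h := fun ρ : ℝ => ρ ^ 2) r (hF k (r ^ 2) (hmap r hr)) hsq
          have hpow : HasDerivAt (fun ρ : ℝ => ρ ^ (2 * k + 1))
              ((2 * (k : ℝ) + 1) * r ^ (2 * k)) r := by
            simpa using hasDerivAt_pow (2 * k + 1) r
          have := hcomp.mul hpow
          simpa [Function.comp_def, Pi.mul_def] using this
        -- derivative of RHS
        have hR : HasDerivAt (fun ρ => ∑ j ∈ Finset.range (k + 1),
            ((-1 : ℝ) ^ (k + j) * c j) * (iteratedDerivWithin j g t ρ * ρ ^ (j + 1)))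
            (∑ j ∈ Finset.range (k + 1), ((-1 : ℝ) ^ (k + j) * c j) *
              (iteratedDerivWithin (j + 1) g t r * r ^ (j + 1) +
               iteratedDerivWithin j g t r * (((j : ℝ) + 1) * r ^ j))) r := by
          apply HasDerivAt.fun_sum
          intro j hj
          have hpow : HasDerivAt (fun ρ : ℝ => ρ ^ (j + 1)) (((j : ℝ) + 1) * r ^ j) r := by
            simpa using hasDerivAt_pow (j + 1) r
          exact ((hG j r hr).mul hpow).const_mul _
        have hderiv_eq : iteratedDerivWithin (k + 1) f s (r ^ 2) * (2 * r) * r ^ (2 * k + 1) +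
            iteratedDerivWithin k f s (r ^ 2) * ((2 * (k : ℝ) + 1) * r ^ (2 * k)) =
            ∑ j ∈ Finset.range (k + 1), ((-1 : ℝ) ^ (k + j) * c j) *
              (iteratedDerivWithin (j + 1) g t r * r ^ (j + 1) +
               iteratedDerivWithin j g t r * (((j : ℝ) + 1) * r ^ j)) := by
          have h1 := hL.deriv
          have h2 := hR.deriv
          rw [← h1, ← h2]
          exact Filter.EventuallyEq.deriv_eq hEq
        set F1 := iteratedDerivWithin (k + 1) f s (r ^ 2) with hF1
        set F0 := iteratedDerivWithin k f s (r ^ 2) with hF0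
        have hbase := hceq r hr
        have hmain : 2 * (F1 * r ^ (2 * (k + 1) + 1)) =
            (∑ j ∈ Finset.range (k + 1), ((-1 : ℝ) ^ (k + j) * c j) *
              (iteratedDerivWithin (j + 1) g t r * r ^ (j + 1) +
               iteratedDerivWithin j g t r * (((j : ℝ) + 1) * r ^ j))) * r -
            (2 * (k : ℝ) + 1) * (∑ j ∈ Finset.range (k + 1),
              ((-1 : ℝ) ^ (k + j) * c j) * (iteratedDerivWithin j g t r * r ^ (j + 1))) := by
          rw [← hderiv_eq, ← hbase]
          ring
        -- rewrite the new sum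
        have hsum : 2 * ∑ j ∈ Finset.range (k + 1 + 1),
              ((-1 : ℝ) ^ (k + 1 + j) *
                ((if j = 0 then 0 else c (j - 1) / 2) + c j * ((2 * k : ℝ) - j) / 2)) *
              (iteratedDerivWithin j g t r * r ^ (j + 1)) =
            (∑ j ∈ Finset.range (k + 1), ((-1 : ℝ) ^ (k + j) * c j) *
              (iteratedDerivWithin (j + 1) g t r * r ^ (j + 1) +
               iteratedDerivWithin j g t r * (((j : ℝ) + 1) * r ^ j))) * r -
            (2 * (k : ℝ) + 1) * (∑ j ∈ Finset.range (k + 1),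
              ((-1 : ℝ) ^ (k + j) * c j) * (iteratedDerivWithin j g t r * r ^ (j + 1))) := by
          have e1 : 2 * ∑ j ∈ Finset.range (k + 1 + 1),
              ((-1 : ℝ) ^ (k + 1 + j) *
                ((if j = 0 then 0 else c (j - 1) / 2) + c j * ((2 * k : ℝ) - j) / 2)) *
              (iteratedDerivWithin j g t r * r ^ (j + 1)) =
              ∑ j ∈ Finset.range (k + 1 + 1),
               (((-1 : ℝ) ^ (k + 1 + j) * (if j = 0 then 0 else c (j - 1)) *
                  (iteratedDerivWithin j g t r * r ^ (j + 1))) +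
                ((-1 : ℝ) ^ (k + 1 + j) * (c j * ((2 * k : ℝ) - j)) *
                  (iteratedDerivWithin j g t r * r ^ (j + 1)))) := by
            rw [Finset.mul_sum]
            apply Finset.sum_congr rfl
            intro j _
            split_ifs <;> ring
          rw [e1, Finset.sum_add_distrib]
          have hfst : ∑ j ∈ Finset.range (k + 1 + 1),
              ((-1 : ℝ) ^ (k + 1 + j) * (if j = 0 then 0 else c (j - 1)) *
                (iteratedDerivWithin j g t r * r ^ (j + 1))) =
              ∑ i ∈ Finset.range (k + 1),
              ((-1 : ℝ) ^ (k + i) * c i *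
                (iteratedDerivWithin (i + 1) g t r * (r ^ (i + 1) * r))) := by
            rw [Finset.sum_range_succ']
            have h0 : ((-1 : ℝ) ^ (k + 1 + 0) * (if 0 = 0 then 0 else c (0 - 1)) *
                (iteratedDerivWithin 0 g t r * r ^ (0 + 1))) = 0 := by simp
            rw [h0, add_zero]
            apply Finset.sum_congr rfl
            intro i _
            rw [if_neg (Nat.succ_ne_zero i)]
            have hsign : (-1 : ℝ) ^ (k + 1 + (i + 1)) = (-1) ^ (k + i) := by
              rw [show k + 1 + (i + 1) = (k + i) + 2 by ring, pow_add]
              norm_num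
            rw [hsign, Nat.add_sub_cancel]
            ring
          have hsnd : ∑ j ∈ Finset.range (k + 1 + 1),
              ((-1 : ℝ) ^ (k + 1 + j) * (c j * ((2 * k : ℝ) - j)) *
                (iteratedDerivWithin j g t r * r ^ (j + 1))) =
              ∑ j ∈ Finset.range (k + 1),
              ((-1 : ℝ) ^ (k + 1 + j) * (c j * ((2 * k : ℝ) - j)) *
                (iteratedDerivWithin j g t r * r ^ (j + 1))) := by
            rw [Finset.sum_range_succ, hcz (k + 1) (lt_add_one k)]
            simp
          rw [hfst, hsnd, Finset.sum_mul, Finset.mul_sum, ← Finset.sum_sub_distrib,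
            ← Finset.sum_add_distrib]
          apply Finset.sum_congr rfl
          intro j hj
          have hsign : (-1 : ℝ) ^ (k + 1 + j) = -((-1) ^ (k + j)) := by
            rw [show k + 1 + j = (k + j) + 1 by ring, pow_succ]
            ring
          rw [hsign]
          ring
        rw [← hsum] at hmain
        exact mul_left_cancel₀ (two_ne_zero) hmain
  -- conclude
  intro k x hx
  obtain ⟨c, hc0, hcz, hceq⟩ := key k
  set r := Real.sqrt x with hr_def
  have hx0 : 0 < x := lt_trans (by positivity) hx.1
  have hrx : r ^ 2 = x := Real.sq_sqrt hx0.le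
  have hr : r ∈ t := by
    constructor
    · have := Real.sqrt_lt_sqrt (by positivity) hx.1
      rwa [Real.sqrt_sq ha.le] at this
    · have := Real.sqrt_lt_sqrt hx0.le hx.2
      rwa [Real.sqrt_sq (le_of_lt (lt_trans ha hab))] at this
  have hr0 : 0 < r := lt_trans ha hr.1
  have hid := hceq r hr
  rw [hrx] at hid
  have hpos : 0 ≤ (-1 : ℝ) ^ k * iteratedDerivWithin k f s x * r ^ (2 * k + 1) := by
    have heq2 : (-1 : ℝ) ^ k * iteratedDerivWithin k f s x * r ^ (2 * k + 1) =
        ∑ j ∈ Finset.range (k + 1),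
          (c j * ((-1 : ℝ) ^ j * iteratedDerivWithin j g t r) * r ^ (j + 1)) := by
      rw [mul_assoc, hid, Finset.mul_sum]
      apply Finset.sum_congr rfl
      intro j _
      have hsign : (-1 : ℝ) ^ k * (-1) ^ (k + j) = (-1) ^ j := by
        rw [← pow_add, show k + (k + j) = j + 2 * k by ring, pow_add, pow_mul]
        norm_num
      calc (-1 : ℝ) ^ k * (((-1 : ℝ) ^ (k + j) * c j) *
            (iteratedDerivWithin j g t r * r ^ (j + 1)))
          = ((-1 : ℝ) ^ k * (-1) ^ (k + j)) * c j *
            (iteratedDerivWithin j g t r * r ^ (j + 1)) := by ring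
        _ = c j * ((-1 : ℝ) ^ j * iteratedDerivWithin j g t r) * r ^ (j + 1) := by
            rw [hsign]; ring
    rw [heq2]
    apply Finset.sum_nonneg
    intro j _
    have h1 := hc0 j
    have h2 := hcm j r hr
    have h3 : (0 : ℝ) ≤ r ^ (j + 1) := by positivity
    exact mul_nonneg (mul_nonneg h1 h2) h3
  have hrp : 0 < r ^ (2 * k + 1) := by positivity
  nlinarith [hpos, hrp]
end

section
/- If a C^∞ function f is completely monotonic on an interval but not strictly completely monotonic (i.e., some derivative vanishes at an interior point), then f is a polynomial. -/
open Set Polynomial Filter Topology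

private lemma iterDW_open {f : ℝ → ℝ} {s : Set ℝ} (hs : IsOpen s) (n : ℕ) {x : ℝ} (hx : x ∈ s) :
    iteratedDerivWithin n f s x = iteratedDeriv n f x := by
  rw [iteratedDerivWithin_eq_iteratedFDerivWithin, iteratedDeriv_eq_iteratedFDeriv,
    iteratedFDerivWithin_of_isOpen n hs hx]

private lemma poly_antideriv (p : Polynomial ℝ) : ∃ P : Polynomial ℝ, P.derivative = p := by
  refine ⟨p.sum fun n a => C (a / (n + 1)) * X ^ (n + 1), ?_⟩
  conv_rhs => rw [← sum_C_mul_X_pow_eq p]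
  rw [Polynomial.sum_def, Polynomial.sum_def, derivative_sum]
  refine Finset.sum_congr rfl fun n _ => ?_
  have hne : ((n : ℝ) + 1) ≠ 0 := by positivity
  rw [derivative_C_mul_X_pow]
  push_cast
  rw [div_mul_cancel₀ _ hne]

private lemma cm_anti {a b : ℝ} {u : ℕ → ℝ → ℝ}
    (hnn : ∀ m, ∀ t ∈ Ioo a b, 0 ≤ u m t)
    (hd : ∀ m, ∀ t ∈ Ioo a b, HasDerivAt (u m) (-(u (m+1) t)) t) (m : ℕ) :
    AntitoneOn (u m) (Ioo a b) := by
  apply antitoneOn_of_hasDerivWithinAt_nonpos (convex_Ioo a b) (f' := fun t => -(u (m+1) t))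
  · exact fun t ht => (hd m t ht).continuousAt.continuousWithinAt
  · intro t ht; rw [interior_Ioo] at ht; exact (hd m t ht).hasDerivWithinAt
  · intro t ht; rw [interior_Ioo] at ht; simp only [neg_nonpos]; exact hnn (m+1) t ht

private lemma anti_Icc {x y : ℝ} {ψ ψ' : ℝ → ℝ} (hd : ∀ t ∈ Icc x y, HasDerivAt ψ (ψ' t) t)
    (hn : ∀ t ∈ Ioo x y, ψ' t ≤ 0) : AntitoneOn ψ (Icc x y) := by
  apply antitoneOn_of_hasDerivWithinAt_nonpos (convex_Icc x y) (f' := ψ')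
  · exact fun t ht => (hd t ht).continuousAt.continuousWithinAt
  · intro t ht; rw [interior_Icc] at ht; exact (hd t (Ioo_subset_Icc_self ht)).hasDerivWithinAt
  · intro t ht; rw [interior_Icc] at ht; exact hn t ht

private lemma hasDerivAt_cpow (C e t : ℝ) (j : ℕ) :
    HasDerivAt (fun s => C * (e - s)^(j+1)) (-(C * (((j:ℝ)+1) * (e - t)^j))) t := by
  have h := (((hasDerivAt_id t).const_sub e).pow (j+1)).const_mul C
  refine h.congr_deriv ?_
  push_cast [Nat.add_sub_cancel, id]
  ring

private lemma cm_A {a b : ℝ} {u : ℕ → ℝ → ℝ}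
    (hnn : ∀ m, ∀ t ∈ Ioo a b, 0 ≤ u m t)
    (hd : ∀ m, ∀ t ∈ Ioo a b, HasDerivAt (u m) (-(u (m+1) t)) t)
    {c x : ℝ} (hc : c < b) (hx : a < x) (hxc : x ≤ c) (h0 : ∀ m, u m c = 0) :
    ∀ j m, ∀ t ∈ Icc x c, ((Nat.factorial j : ℕ) : ℝ) * u m t ≤ u (m+j) x * (c - t)^j := by
  have hsub : Icc x c ⊆ Ioo a b := fun t ht => ⟨hx.trans_le ht.1, ht.2.trans_lt hc⟩
  intro j
  induction j with
  | zero =>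
    intro m t ht
    simp only [Nat.factorial_zero, Nat.cast_one, one_mul, add_zero, pow_zero, mul_one]
    exact cm_anti hnn hd m (hsub ⟨le_rfl, hxc⟩) (hsub ht) ht.1
  | succ j ih =>
    intro m t ht
    have hψ : AntitoneOn (fun s => u (m + (j+1)) x * (c - s)^(j+1)
        - ((Nat.factorial (j+1) : ℕ) : ℝ) * u m s) (Icc x c) := by
      apply anti_Icc (ψ' := fun s => -(u (m + (j+1)) x * (((j:ℝ)+1) * (c - s)^j))
        - ((Nat.factorial (j+1) : ℕ) : ℝ) * (-(u (m+1) s)))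
      · intro s hs
        exact (hasDerivAt_cpow _ c s j).sub ((hd m s (hsub hs)).const_mul _)
      · intro s hs
        have h1 := ih (m+1) s (Ioo_subset_Icc_self hs)
        rw [show m + 1 + j = m + (j+1) by ring] at h1
        have hj : (0:ℝ) ≤ (j:ℝ) + 1 := by positivity
        simp only [Nat.factorial_succ, Nat.cast_mul, Nat.cast_add, Nat.cast_one]
        nlinarith [mul_le_mul_of_nonneg_left h1 hj]
    have hcc : c ∈ Icc x c := ⟨hxc, le_rfl⟩
    have := hψ ht hcc ht.2
    have e : (c - c)^(j+1) = 0 := by simp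
    simp only [e, h0 m, mul_zero, sub_zero] at this
    linarith

private lemma cm_B {a b : ℝ} {u : ℕ → ℝ → ℝ}
    (hnn : ∀ m, ∀ t ∈ Ioo a b, 0 ≤ u m t)
    (hd : ∀ m, ∀ t ∈ Ioo a b, HasDerivAt (u m) (-(u (m+1) t)) t)
    {z x : ℝ} (hz : a < z) (hzx : z ≤ x) (hxb : x < b) :
    ∀ j m, ∀ t ∈ Icc z x, u (m+j) x * (x - t)^j ≤ ((Nat.factorial j : ℕ) : ℝ) * u m t := by
  have hsub : Icc z x ⊆ Ioo a b := fun t ht => ⟨hz.trans_le ht.1, ht.2.trans_lt hxb⟩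
  intro j
  induction j with
  | zero =>
    intro m t ht
    simp only [Nat.factorial_zero, Nat.cast_one, one_mul, add_zero, pow_zero, mul_one]
    exact cm_anti hnn hd m (hsub ht) (hsub ⟨hzx, le_rfl⟩) ht.2
  | succ j ih =>
    intro m t ht
    have hψ : AntitoneOn (fun s => ((Nat.factorial (j+1) : ℕ) : ℝ) * u m s
        - u (m + (j+1)) x * (x - s)^(j+1)) (Icc z x) := by
      apply anti_Icc (ψ' := fun s => ((Nat.factorial (j+1) : ℕ) : ℝ) * (-(u (m+1) s))
        - -(u (m + (j+1)) x * (((j:ℝ)+1) * (x - s)^j)))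
      · intro s hs
        exact ((hd m s (hsub hs)).const_mul _).sub (hasDerivAt_cpow _ x s j)
      · intro s hs
        have h1 := ih (m+1) s (Ioo_subset_Icc_self hs)
        rw [show m + 1 + j = m + (j+1) by ring] at h1
        have hj : (0:ℝ) ≤ (j:ℝ) + 1 := by positivity
        simp only [Nat.factorial_succ, Nat.cast_mul, Nat.cast_add, Nat.cast_one]
        nlinarith [mul_le_mul_of_nonneg_left h1 hj]
    have hxx : x ∈ Icc z x := ⟨hzx, le_rfl⟩
    have := hψ ht hxx ht.2
    have e : (x - x)^(j+1) = 0 := by simp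
    simp only [e, mul_zero, sub_zero] at this
    have hp := mul_nonneg (Nat.cast_nonneg (α := ℝ) (Nat.factorial (j+1)))
      (hnn m x (hsub hxx))
    linarith

private lemma cm_local {a b : ℝ} {u : ℕ → ℝ → ℝ}
    (hnn : ∀ m, ∀ t ∈ Ioo a b, 0 ≤ u m t)
    (hd : ∀ m, ∀ t ∈ Ioo a b, HasDerivAt (u m) (-(u (m+1) t)) t)
    {c : ℝ} (hac : a < c) (hcb : c < b) (h0 : ∀ m, u m c = 0) {x : ℝ}
    (hx1 : c - (c - a)/3 < x) (hx2 : x ≤ c) : u 0 x = 0 := by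
  obtain ⟨z, hz⟩ : ∃ z : ℝ, z = c - 2*(c-a)/3 := ⟨_, rfl⟩
  have haz : a < z := by rw [hz]; linarith
  have hzx : z < x := by rw [hz]; linarith
  have hxa : a < x := haz.trans hzx
  have hxb : x < b := hx2.trans_lt hcb
  have hA := cm_A hnn hd hcb hxa hx2 h0
  have hB := cm_B hnn hd haz hzx.le hxb
  have hP : 0 < x - z := by linarith
  have hr0 : 0 ≤ (c - x)/(x - z) := div_nonneg (by linarith) hP.le
  have hr1 : (c - x)/(x - z) < 1 := by rw [div_lt_one hP, hz]; linarith
  have hbound : ∀ N : ℕ, u 0 x ≤ u 0 z * ((c - x)/(x - z))^N := by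
    intro N
    have e1 := hA N 0 x ⟨le_rfl, hx2⟩
    have e2 := hB N 0 z ⟨le_rfl, hzx.le⟩
    simp only [zero_add] at e1 e2
    have hfac : (0:ℝ) < ((Nat.factorial N : ℕ) : ℝ) := by exact_mod_cast Nat.factorial_pos N
    have hPN : 0 < (x - z)^N := pow_pos hP N
    have hQN : 0 ≤ (c - x)^N := pow_nonneg (by linarith) N
    have key : ((Nat.factorial N : ℕ) : ℝ) * (u 0 x * (x - z)^N)
        ≤ ((Nat.factorial N : ℕ) : ℝ) * (u 0 z * (c - x)^N) := by
      calc ((Nat.factorial N : ℕ) : ℝ) * (u 0 x * (x - z)^N)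
          = (((Nat.factorial N : ℕ) : ℝ) * u 0 x) * (x - z)^N := by ring
        _ ≤ (u N x * (c - x)^N) * (x - z)^N := mul_le_mul_of_nonneg_right e1 hPN.le
        _ = (u N x * (x - z)^N) * (c - x)^N := by ring
        _ ≤ (((Nat.factorial N : ℕ) : ℝ) * u 0 z) * (c - x)^N :=
          mul_le_mul_of_nonneg_right e2 hQN
        _ = ((Nat.factorial N : ℕ) : ℝ) * (u 0 z * (c - x)^N) := by ring
    have key2 := le_of_mul_le_mul_left key hfac
    rw [div_pow, ← mul_div_assoc, le_div_iff₀ hPN]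
    exact key2
  have hlim : Tendsto (fun N : ℕ => u 0 z * ((c - x)/(x - z))^N) atTop (𝓝 0) := by
    have := (tendsto_pow_atTop_nhds_zero_of_lt_one hr0 hr1).const_mul (u 0 z)
    simpa using this
  have hle : u 0 x ≤ 0 := ge_of_tendsto' hlim hbound
  exact le_antisymm hle (hnn 0 x ⟨hxa, hxb⟩)

/-- A completely monotonic function on an interval that is not strictly completely monotonic
(some derivative vanishes at an interior point) is a polynomial. -/
theorem stmt_1 (a b : ℝ) (hab : a < b) (f : ℝ → ℝ)
    (hf : ContDiffOn ℝ (⊤ : ℕ∞) f (Ioo a b))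
    (hcm : ∀ k : ℕ, ∀ x ∈ Ioo a b,
      0 ≤ (-1 : ℝ) ^ k * iteratedDerivWithin k f (Ioo a b) x)
    (hnotstrict : ∃ k : ℕ, ∃ x ∈ Ioo a b, iteratedDerivWithin k f (Ioo a b) x = 0) :
    ∃ p : Polynomial ℝ, ∀ x ∈ Ioo a b, f x = p.eval x := by
  have hD : IsOpen (Ioo a b) := isOpen_Ioo
  have hdiff0 : ∀ n : ℕ, ∀ x ∈ Ioo a b, DifferentiableAt ℝ (iteratedDeriv n f) x := by
    intro n x hx
    have h1 := (hf.differentiableOn_iteratedDerivWithin (m := n)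
      (by exact_mod_cast ENat.coe_lt_top n) hD.uniqueDiffOn x hx).differentiableAt
      (hD.mem_nhds hx)
    exact h1.congr_of_eventuallyEq (Filter.eventuallyEq_of_mem (hD.mem_nhds hx)
      fun y hy => (iterDW_open hD n hy).symm)
  obtain ⟨k, x₀, hx₀, hk0⟩ := hnotstrict
  have hcm' : ∀ n : ℕ, ∀ x ∈ Ioo a b, 0 ≤ (-1:ℝ)^n * iteratedDeriv n f x := fun n x hx => by
    rw [← iterDW_open hD n hx]; exact hcm n x hx
  have hk0' : iteratedDeriv k f x₀ = 0 := by rw [← iterDW_open hD k hx₀]; exact hk0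
  have hdiff : ∀ n : ℕ, ∀ x ∈ Ioo a b, DifferentiableAt ℝ (iteratedDeriv n f) x :=
    fun n x hx => hdiff0 n x hx
  -- (-1)^k * f^(k) is antitone on (a,b)
  have hanti : AntitoneOn (fun x => (-1:ℝ)^k * iteratedDeriv k f x) (Ioo a b) := by
    apply antitoneOn_of_deriv_nonpos (convex_Ioo a b)
    · exact continuousOn_const.mul (fun x hx => (hdiff k x hx).continuousAt.continuousWithinAt)
    · intro x hx
      rw [interior_Ioo] at hx
      exact ((hdiff k x hx).const_mul _).differentiableWithinAt
    · intro x hx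
      rw [interior_Ioo] at hx
      rw [deriv_const_mul _ (hdiff k x hx),
        show deriv (iteratedDeriv k f) x = iteratedDeriv (k+1) f x from by
          rw [← iteratedDeriv_succ]]
      have h1 := hcm' (k+1) x hx
      rw [pow_succ] at h1
      nlinarith [h1]
  -- f^(k) vanishes on (x₀, b)
  have hzero : ∀ x ∈ Ioo x₀ b, iteratedDeriv k f x = 0 := by
    intro x hx
    have hxD : x ∈ Ioo a b := ⟨hx₀.1.trans hx.1, hx.2⟩
    have h1 : (-1:ℝ)^k * iteratedDeriv k f x ≤ (-1:ℝ)^k * iteratedDeriv k f x₀ :=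
      hanti hx₀ hxD hx.1.le
    rw [hk0', mul_zero] at h1
    have h2 := hcm' k x hxD
    have h3 : (-1:ℝ)^k * iteratedDeriv k f x = 0 := le_antisymm h1 h2
    have h4 : ((-1:ℝ)^k) ≠ 0 := pow_ne_zero _ (by norm_num)
    exact (mul_eq_zero.mp h3).resolve_left h4
  -- analytic identity theorem: f^(k) ≡ 0 on (a,b)
  have hz₀ : (x₀ + b)/2 ∈ Ioo x₀ b := ⟨by linarith [hx₀.2], by linarith [hx₀.2]⟩
  have hz₀D : (x₀ + b)/2 ∈ Ioo a b := ⟨hx₀.1.trans hz₀.1, hz₀.2⟩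
  have hzeroD : ∀ x ∈ Ioo a b, iteratedDeriv k f x = 0 := by
    have hdm : ∀ c, a < c → c < b → (∀ y ∈ Ioo c b, iteratedDeriv k f y = 0) →
        ∀ m, ∀ y ∈ Ioo c b, iteratedDeriv (k+m) f y = 0 := by
      intro c hac hcb hc m
      induction m with
      | zero => exact hc
      | succ m ih =>
        intro y hy
        rw [← add_assoc, iteratedDeriv_succ]
        have : iteratedDeriv (k+m) f =ᶠ[𝓝 y] fun _ => 0 :=
          Filter.eventuallyEq_of_mem (isOpen_Ioo.mem_nhds hy) ih
        rw [this.deriv_eq]; simp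
    have hnn : ∀ m, ∀ t ∈ Ioo a b,
        0 ≤ (fun m t => (-1:ℝ)^(k+m) * iteratedDeriv (k+m) f t) m t :=
      fun m t ht => hcm' (k+m) t ht
    have hd' : ∀ m, ∀ t ∈ Ioo a b,
        HasDerivAt ((fun m t => (-1:ℝ)^(k+m) * iteratedDeriv (k+m) f t) m)
          (-((fun m t => (-1:ℝ)^(k+m) * iteratedDeriv (k+m) f t) (m+1) t)) t := by
      intro m t ht
      have h := ((hdiff (k+m) t ht).hasDerivAt).const_mul ((-1:ℝ)^(k+m))
      rw [← iteratedDeriv_succ] at h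
      refine h.congr_deriv ?_
      show (-1:ℝ)^(k+m) * iteratedDeriv (k+m+1) f t
        = -((-1:ℝ)^(k+m+1) * iteratedDeriv (k+m+1) f t)
      rw [pow_succ]
      ring
    have hstep : ∀ c, a < c → c < b → (∀ y ∈ Ioo c b, iteratedDeriv k f y = 0) →
        ∀ y ∈ Ioo (c - (c-a)/3) b, iteratedDeriv k f y = 0 := by
      intro c hac hcb hc y hy
      rcases le_or_gt y c with hyc | hyc
      · have h0 : ∀ m, (-1:ℝ)^(k+m) * iteratedDeriv (k+m) f c = 0 := by
          intro m
          have hcont := (hdiff (k+m) c ⟨hac, hcb⟩).continuousAt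
          have h1 : Tendsto (iteratedDeriv (k+m) f) (𝓝[>] c) (𝓝 0) :=
            tendsto_const_nhds.congr' (Filter.eventuallyEq_of_mem (Ioo_mem_nhdsGT hcb)
              fun t ht => (hdm c hac hcb hc m t ht).symm)
          rw [tendsto_nhds_unique (hcont.tendsto.mono_left nhdsWithin_le_nhds) h1, mul_zero]
        have := cm_local (u := fun m t => (-1:ℝ)^(k+m) * iteratedDeriv (k+m) f t)
          hnn hd' hac hcb h0 hy.1 hyc
        simp only [add_zero] at this
        exact (mul_eq_zero.mp this).resolve_left (pow_ne_zero _ (by norm_num))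
      · exact hc y ⟨hyc, hy.2⟩
    have hiter : ∀ n : ℕ, ∀ y ∈ Ioo (a + (x₀ - a) * (2/3:ℝ)^n) b,
        iteratedDeriv k f y = 0 := by
      intro n
      induction n with
      | zero =>
        have e0 : a + (x₀ - a) * (2/3:ℝ)^0 = x₀ := by ring
        rw [e0]; exact hzero
      | succ n ih =>
        have hpos : 0 < (x₀ - a) * (2/3:ℝ)^n := mul_pos (by linarith [hx₀.1]) (by positivity)
        have hle : (x₀ - a) * (2/3:ℝ)^n ≤ x₀ - a :=
          mul_le_of_le_one_right (by linarith [hx₀.1]) (pow_le_one₀ (by norm_num) (by norm_num))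
        have e : a + (x₀ - a) * (2/3:ℝ)^(n+1)
            = (a + (x₀ - a) * (2/3:ℝ)^n) - ((a + (x₀ - a) * (2/3:ℝ)^n) - a)/3 := by ring
        rw [e]
        exact hstep _ (by linarith) (by linarith [hx₀.2]) ih
    intro x hx
    obtain ⟨n, hn⟩ := exists_pow_lt_of_lt_one
      (show 0 < (x - a)/(x₀ - a) from div_pos (by linarith [hx.1]) (by linarith [hx₀.1]))
      (show (2/3:ℝ) < 1 by norm_num)
    apply hiter n x ⟨?_, hx.2⟩
    rw [lt_div_iff₀ (by linarith [hx₀.1])] at hn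
    nlinarith
  -- downward induction: each iterated derivative is a polynomial
  have key : ∀ j : ℕ, ∃ p : Polynomial ℝ, ∀ x ∈ Ioo a b, iteratedDeriv (k - j) f x = p.eval x := by
    intro j
    induction j with
    | zero => exact ⟨0, fun x hx => by simpa using hzeroD x hx⟩
    | succ j ih =>
      obtain ⟨p, hp⟩ := ih
      rcases Nat.eq_zero_or_pos (k - j) with h0 | hpos
      · have hkj : k - (j+1) = k - j := by omega
        rw [hkj]; exact ⟨p, hp⟩
      · have hm : (k - (j+1)) + 1 = k - j := by omega
        obtain ⟨P, hP⟩ := poly_antideriv p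
        set m := k - (j + 1) with hmdef
        have hcD : (a + b)/2 ∈ Ioo a b := ⟨by linarith, by linarith⟩
        have hconst : ∀ y ∈ Ioo a b,
            (fun t => iteratedDeriv m f t - P.eval t) y
              = (fun t => iteratedDeriv m f t - P.eval t) ((a + b)/2) := by
          intro y hy
          have hdiffon : DifferentiableOn ℝ (fun t => iteratedDeriv m f t - P.eval t)
              (Ioo a b) := fun t ht =>
            ((hdiff m t ht).sub (P.differentiable t)).differentiableWithinAt
          have hfzero : ∀ t ∈ Ioo a b,
              fderivWithin ℝ (fun t => iteratedDeriv m f t - P.eval t) (Ioo a b) t = 0 := by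
            intro t ht
            have h1 : HasDerivAt (iteratedDeriv m f) (iteratedDeriv (m+1) f t) t := by
              have h := (hdiff m t ht).hasDerivAt
              rwa [show deriv (iteratedDeriv m f) t = iteratedDeriv (m+1) f t from by
                rw [← iteratedDeriv_succ]] at h
            have h2 : HasDerivAt (fun t => P.eval t) (p.eval t) t := by
              have := P.hasDerivAt t
              rwa [hP] at this
            have h3 := h1.sub h2
            have h4 : iteratedDeriv (m+1) f t - p.eval t = 0 := by
              rw [hm, hp t ht, sub_self]
            rw [h4] at h3
            have h5 : fderivWithin ℝ (fun t => iteratedDeriv m f t - P.eval t) (Ioo a b) t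
                = fderiv ℝ (fun t => iteratedDeriv m f t - P.eval t) t :=
              fderivWithin_of_isOpen hD ht
            rw [h5, (show HasDerivAt (fun t => iteratedDeriv m f t - P.eval t) 0 t from h3).hasFDerivAt.fderiv]
            ext
            simp

          exact Convex.is_const_of_fderivWithin_eq_zero (𝕜 := ℝ) (convex_Ioo a b)
            hdiffon hfzero hy hcD
        refine ⟨P + C (iteratedDeriv m f ((a + b)/2) - P.eval ((a + b)/2)), fun x hx => ?_⟩
        have h7 := hconst x hx
        simp only [eval_add, eval_C]
        simp only at h7
        linarith [h7]
  obtain ⟨p, hp⟩ := key k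
  refine ⟨p, fun x hx => ?_⟩
  have h := hp x hx
  simpa using h
end

section
/- Let f be absolutely monotonic on (a,b), let t₁,…,t_m ∈ [a,b] be distinct, k₁,…,k_m positive integers, and let p be the Hermite interpolating polynomial of f at the t_i to orders k_i. Then the function t ↦ (f(t) − p(t)) / ∏_{i=1}^m (t−t_i)^{k_i} (extended by continuity at the t_i) is absolutely monotonic on (a,b). -/
open Set intervalIntegral MeasureTheory
open scoped ContDiff

noncomputable def Phi (F : ℝ → ℝ) (c : ℝ) (n : ℕ) (x : ℝ) : ℝ :=
  ∫ s in (0:ℝ)..1, s ^ n * iteratedDeriv (n+1) F (c + s * (x - c))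

lemma contIter {F : ℝ → ℝ} (hF : ContDiff ℝ ∞ F) (n : ℕ) :
    ContDiff ℝ ∞ (iteratedDeriv n F) := by
  rw [iteratedDeriv_eq_iterate]
  exact (hF.of_le le_rfl).iterate_deriv n

lemma hasDerivAt_iter {F : ℝ → ℝ} (hF : ContDiff ℝ ∞ F) (n : ℕ) (y : ℝ) :
    HasDerivAt (iteratedDeriv n F) (iteratedDeriv (n+1) F y) y := by
  have h := ((contIter hF n).differentiable (by simp)).differentiableAt (x := y) |>.hasDerivAt
  have h2 : deriv (iteratedDeriv n F) y = iteratedDeriv (n+1) F y := by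
    rw [iteratedDeriv_succ]
  rwa [h2] at h

lemma integrand_hasDerivAt {F : ℝ → ℝ} (hF : ContDiff ℝ ∞ F) (c : ℝ) (n : ℕ) (s x : ℝ) :
    HasDerivAt (fun x => s ^ n * iteratedDeriv (n+1) F (c + s * (x - c)))
      (s ^ (n+1) * iteratedDeriv (n+2) F (c + s * (x - c))) x := by
  have hinner : HasDerivAt (fun x : ℝ => c + s * (x - c)) s x := by
    simpa using (((hasDerivAt_id x).sub_const c).const_mul s).const_add c
  have h := ((hasDerivAt_iter hF (n+1) (c + s * (x - c))).comp x hinner).const_mul (s ^ n)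
  refine h.congr_deriv ?_
  ring

lemma phi_hasDerivAt {F : ℝ → ℝ} (hF : ContDiff ℝ ∞ F) (c : ℝ) (n : ℕ) (x₀ : ℝ) :
    HasDerivAt (Phi F c n) (Phi F c (n+1) x₀) x₀ := by
  -- bound on the compact interval
  obtain ⟨M, hM⟩ : ∃ M, ∀ y ∈ Icc (-(|c| + |x₀ - c| + 1)) (|c| + |x₀ - c| + 1),
      ‖iteratedDeriv (n+2) F y‖ ≤ M :=
    isCompact_Icc.exists_bound_of_continuousOn ((contIter hF (n+2)).continuous.continuousOn)
  set R := |c| + |x₀ - c| + 1 with hR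
  have hpt : ∀ s ∈ Set.Ioc (0:ℝ) 1, ∀ x ∈ Metric.ball x₀ 1,
      c + s * (x - c) ∈ Icc (-R) R := by
    intro s hs x hx
    have hxd : |x - c| ≤ |x₀ - c| + 1 := by
      have := abs_sub_abs_le_abs_sub (x - c) (x₀ - c)
      have hd : |x - x₀| < 1 := by simpa [Real.dist_eq] using hx
      have : |x - c| - |x₀ - c| ≤ |x - x₀| := by
        calc |x - c| - |x₀ - c| ≤ |(x - c) - (x₀ - c)| := abs_sub_abs_le_abs_sub _ _
        _ = |x - x₀| := by ring_nf
      linarith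
    have hs0 : 0 ≤ s := le_of_lt hs.1
    have hs1 : s ≤ 1 := hs.2
    have habs : |c + s * (x - c)| ≤ R := by
      have e1 : |c + s * (x - c)| ≤ |c| + |s * (x - c)| := abs_add_le _ _
      have e2 : |s * (x - c)| = s * |x - c| := by rw [abs_mul, abs_of_nonneg hs0]
      nlinarith [abs_nonneg (x - c), abs_nonneg c]
    exact abs_le.1 habs
  have key := intervalIntegral.hasDerivAt_integral_of_dominated_loc_of_deriv_le
    (F := fun x s => s ^ n * iteratedDeriv (n+1) F (c + s * (x - c)))
    (F' := fun x s => s ^ (n+1) * iteratedDeriv (n+2) F (c + s * (x - c)))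
    (x₀ := x₀) (a := (0:ℝ)) (b := 1) (μ := volume) (bound := fun _ => M)
    (s := Metric.ball x₀ 1) (Metric.ball_mem_nhds x₀ one_pos)
    ?_ ?_ ?_ ?_ ?_ ?_
  · exact key.2
  · filter_upwards with x
    apply Continuous.aestronglyMeasurable
    have hcont := (contIter hF (n+1)).continuous
    have hcont2 := (contIter hF (n+2)).continuous
    fun_prop
  · apply Continuous.intervalIntegrable
    have hcont := (contIter hF (n+1)).continuous
    have hcont2 := (contIter hF (n+2)).continuous
    fun_prop
  · apply Continuous.aestronglyMeasurable
    have hcont := (contIter hF (n+1)).continuous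
    have hcont2 := (contIter hF (n+2)).continuous
    fun_prop
  · filter_upwards with s hs x hx
    rw [Set.uIoc_of_le (by norm_num : (0:ℝ) ≤ 1)] at hs
    have h1 : |s ^ (n+1)| ≤ 1 := by
      rw [abs_pow]
      apply pow_le_one₀ (abs_nonneg _)
      rw [abs_of_nonneg hs.1.le]; exact hs.2
    have h2 := hM _ (hpt s hs x hx)
    calc ‖s ^ (n+1) * iteratedDeriv (n+2) F (c + s * (x - c))‖
        = |s ^ (n+1)| * ‖iteratedDeriv (n+2) F (c + s * (x - c))‖ := by
          rw [norm_mul]; rfl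
      _ ≤ 1 * M := by
          apply mul_le_mul h1 h2 (norm_nonneg _) one_pos.le
      _ = M := one_mul M
  · apply Continuous.intervalIntegrable
    have hcont := (contIter hF (n+1)).continuous
    have hcont2 := (contIter hF (n+2)).continuous
    fun_prop
  · filter_upwards with s _ x _
    exact integrand_hasDerivAt hF c n s x

lemma phi_sub_eq {F : ℝ → ℝ} (hF : ContDiff ℝ ∞ F) (c x : ℝ) :
    (x - c) * Phi F c 0 x = F x - F c := by
  have hft : ∀ s ∈ Set.uIcc (0:ℝ) 1,
      HasDerivAt (fun s => F (c + s * (x - c)))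
        ((x - c) * iteratedDeriv 1 F (c + s * (x - c))) s := by
    intro s _
    have hinner : HasDerivAt (fun s : ℝ => c + s * (x - c)) (x - c) s := by
      simpa using ((hasDerivAt_id s).mul_const (x - c)).const_add c
    have := (hasDerivAt_iter hF 0 (c + s * (x - c))).comp s hinner
    simpa [mul_comm, Function.comp_def] using this
  have hint : IntervalIntegrable (fun s => (x - c) * iteratedDeriv 1 F (c + s * (x - c)))
      volume 0 1 := by
    apply Continuous.intervalIntegrable
    have := (contIter hF 1).continuous
    fun_prop
  have h := intervalIntegral.integral_eq_sub_of_hasDerivAt hft hint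
  simp only [one_mul, zero_mul, add_zero] at h
  have h2 : ∫ s in (0:ℝ)..1, (x - c) * iteratedDeriv 1 F (c + s * (x - c))
      = (x - c) * Phi F c 0 x := by
    rw [Phi]
    simp only [pow_zero, one_mul]
    rw [intervalIntegral.integral_const_mul]
  rw [h2] at h
  have e : c + (x - c) = x := by ring
  rw [e] at h
  exact h

lemma dslope_eq_phi {F : ℝ → ℝ} (hF : ContDiff ℝ ∞ F) (c : ℝ) (x : ℝ) :
    dslope F c x = Phi F c 0 x := by
  rcases eq_or_ne x c with rfl | hxc
  · rw [dslope_same, Phi]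
    simp only [pow_zero, one_mul, sub_self, mul_zero, add_zero]
    rw [intervalIntegral.integral_const]
    simp [iteratedDeriv_one]
  · rw [dslope_of_ne _ hxc, slope_def_field]
    have h := phi_sub_eq hF c x
    rw [div_eq_iff (sub_ne_zero.2 hxc), ← h]
    ring

lemma iteratedDeriv_dslope {F : ℝ → ℝ} (hF : ContDiff ℝ ∞ F) (c : ℝ) (n : ℕ) :
    iteratedDeriv n (dslope F c) = Phi F c n := by
  induction n with
  | zero => funext x; exact dslope_eq_phi hF c x
  | succ n ih =>
    rw [iteratedDeriv_succ, ih]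
    funext x
    exact (phi_hasDerivAt hF c n x).deriv

lemma phi_leib {F : ℝ → ℝ} (hF : ContDiff ℝ ∞ F) (c : ℝ) (n : ℕ) (x : ℝ) :
    iteratedDeriv (n+1) F x = (x - c) * Phi F c (n+1) x + (n+1) * Phi F c n x := by
  induction n generalizing x with
  | zero =>
    have h1 : F = fun x => (x - c) * Phi F c 0 x + F c := by
      funext y; have := phi_sub_eq hF c y; linarith
    have h2 : HasDerivAt (fun x => (x - c) * Phi F c 0 x + F c)
        (1 * Phi F c 0 x + (x - c) * Phi F c 1 x) x :=
      (((hasDerivAt_id x).sub_const c).mul (phi_hasDerivAt hF c 0 x)).add_const (F c)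
    rw [iteratedDeriv_one]
    conv_lhs => rw [h1]
    rw [h2.deriv]
    push_cast
    ring
  | succ n ih =>
    have h1 : iteratedDeriv (n+1) F = fun x => (x - c) * Phi F c (n+1) x + (n+1) * Phi F c n x := by
      funext y; exact ih y
    have h2 : HasDerivAt (fun x => (x - c) * Phi F c (n+1) x + (n+1) * Phi F c n x)
        ((1 * Phi F c (n+1) x + (x - c) * Phi F c (n+2) x) + (n+1) * Phi F c (n+1) x) x :=
      (((hasDerivAt_id x).sub_const c).mul (phi_hasDerivAt hF c (n+1) x)).add
        ((phi_hasDerivAt hF c n x).const_mul ((n:ℝ)+1))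
    rw [iteratedDeriv_succ, h1, h2.deriv]
    push_cast
    ring

lemma phi_at_c {F : ℝ → ℝ} (c : ℝ) (n : ℕ) :
    Phi F c n c = iteratedDeriv (n+1) F c / (n+1) := by
  rw [Phi]
  simp only [sub_self, mul_zero, add_zero]
  rw [intervalIntegral.integral_mul_const, integral_pow]
  simp
  ring

lemma phi_nonneg {a b : ℝ} {F : ℝ → ℝ} {c : ℝ} (hc : c ∈ Icc a b) {n : ℕ}
    (hpos : ∀ y ∈ Ioo a b, 0 ≤ iteratedDeriv (n+1) F y) {x : ℝ} (hx : x ∈ Ioo a b) :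
    0 ≤ Phi F c n x := by
  rw [Phi]
  apply intervalIntegral.integral_nonneg_of_ae_restrict (by norm_num)
  have h0 : ∀ᵐ s : ℝ, s ≠ 0 := by
    rw [MeasureTheory.ae_iff]
    have : {a : ℝ | ¬a ≠ 0} = {0} := by ext s; simp
    rw [this]
    exact measure_singleton (0:ℝ)
  rw [Filter.EventuallyLE]
  have h0' := MeasureTheory.ae_restrict_of_ae (μ := volume) (s := Icc (0:ℝ) 1) h0
  have hmem := MeasureTheory.ae_restrict_mem (μ := volume) (measurableSet_Icc (a := (0:ℝ)) (b := 1))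
  filter_upwards [h0', hmem] with s hs0 hsI
  have hs : 0 < s := lt_of_le_of_ne hsI.1 (Ne.symm hs0)
  have hpt : c + s * (x - c) ∈ Ioo a b := by
    obtain ⟨hca, hcb⟩ := hc
    obtain ⟨hxa, hxb⟩ := hx
    have hs1 : s ≤ 1 := hsI.2
    constructor <;> nlinarith
  have := hpos _ hpt
  have hsn : (0:ℝ) ≤ s ^ n := pow_nonneg hs.le n
  simpa using mul_nonneg hsn this

lemma vanish_dslope_self {F : ℝ → ℝ} (hF : ContDiff ℝ ∞ F) (c : ℝ) {κ : ℕ}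
    (h : ∀ r < κ, iteratedDeriv r F c = 0) :
    ∀ r, r + 1 < κ → iteratedDeriv r (dslope F c) c = 0 := by
  intro r hr
  rw [iteratedDeriv_dslope hF, phi_at_c, h (r+1) hr, zero_div]

lemma vanish_dslope_ne {F : ℝ → ℝ} (hF : ContDiff ℝ ∞ F) {c d : ℝ} (hdc : d ≠ c)
    (hc0 : F c = 0) {κ : ℕ} (h : ∀ r < κ, iteratedDeriv r F d = 0) :
    ∀ r < κ, iteratedDeriv r (dslope F c) d = 0 := by
  intro r hr
  induction r with
  | zero =>
    have hFd : F d = 0 := by simpa using h 0 (by omega)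
    rw [iteratedDeriv_zero, dslope_of_ne _ hdc, slope_def_field, hFd, hc0]
    simp
  | succ r ih =>
    have h1 := phi_leib hF c r d
    have h2 : iteratedDeriv (r+1) F d = 0 := h (r+1) hr
    have h3 : iteratedDeriv r (dslope F c) d = 0 := ih (by omega)
    rw [iteratedDeriv_dslope hF] at h3 ⊢
    rw [h2, h3] at h1
    have h4 : (d - c) * Phi F c (r+1) d = 0 := by
      linarith
    rcases mul_eq_zero.1 h4 with h5 | h5
    · exact absurd (sub_eq_zero.1 h5) hdc
    · exact h5

lemma dslope_analytic {F : ℝ → ℝ} (hF : ContDiff ℝ ∞ F) (c : ℝ) :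
    ContDiff ℝ ∞ (dslope F c) := by
  apply contDiff_of_differentiable_iteratedDeriv (n := ⊤)
  intro n _
  rw [iteratedDeriv_dslope hF]
  exact fun x => (phi_hasDerivAt hF c n x).differentiableAt

noncomputable def divList : List ℝ → (ℝ → ℝ) → (ℝ → ℝ)
  | [], F => F
  | c :: L, F => divList L (dslope F c)

lemma divList_main (a b : ℝ) (L : List ℝ) : ∀ F : ℝ → ℝ, ContDiff ℝ ∞ F →
    (∀ c ∈ L, c ∈ Icc a b) →
    (∀ c ∈ L, ∀ r < L.count c, iteratedDeriv r F c = 0) →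
    (∀ r : ℕ, L.length ≤ r → ∀ x ∈ Ioo a b, 0 ≤ iteratedDeriv r F x) →
    ContDiff ℝ ∞ (divList L F) ∧
    (∀ x, (∀ c ∈ L, x ≠ c) → divList L F x = F x / (L.map (fun c => x - c)).prod) ∧
    (∀ n : ℕ, ∀ x ∈ Ioo a b, 0 ≤ iteratedDeriv n (divList L F) x) := by
  induction L with
  | nil =>
    intro F hF _ _ hpos
    refine ⟨hF, fun x _ => by simp [divList], fun n x hx => hpos n (by simp) x hx⟩
  | cons c L ih =>
    intro F hF hmem hvan hpos
    have hc : c ∈ Icc a b := hmem c (List.mem_cons_self (a := c) (l := L))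
    have hc0 : F c = 0 := by
      have := hvan c (List.mem_cons_self (a := c) (l := L)) 0 (by
        rw [List.count_cons_self]; omega)
      simpa using this
    set G := dslope F c with hG
    have hGc : ContDiff ℝ ∞ G := dslope_analytic hF c
    have hmemG : ∀ d ∈ L, d ∈ Icc a b := fun d hd => hmem d (List.mem_cons_of_mem c hd)
    have hvanG : ∀ d ∈ L, ∀ r < L.count d, iteratedDeriv r G d = 0 := by
      intro d hd r hr
      rcases eq_or_ne d c with rfl | hdc
      · apply vanish_dslope_self hF d (κ := (d :: L).count d)
          (hvan d (List.mem_cons_self (a := d) (l := L)))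
        rw [List.count_cons_self]; omega
      · apply vanish_dslope_ne hF hdc hc0 (κ := L.count d) _ r hr
        intro r' hr'
        apply hvan d (List.mem_cons_of_mem c hd)
        rwa [List.count_cons_of_ne hdc.symm]
    have hposG : ∀ r : ℕ, L.length ≤ r → ∀ x ∈ Ioo a b, 0 ≤ iteratedDeriv r G x := by
      intro r hr x hx
      rw [hG, iteratedDeriv_dslope hF]
      apply phi_nonneg hc _ hx
      intro y hy
      apply hpos (r+1) _ y hy
      simp only [List.length_cons]; omega
    obtain ⟨ih1, ih2, ih3⟩ := ih G hGc hmemG hvanG hposG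
    refine ⟨ih1, ?_, ih3⟩
    intro x hxne
    have hxc : x ≠ c := hxne c (List.mem_cons_self (a := c) (l := L))
    have hGx : G x = F x / (x - c) := by
      rw [hG, dslope_of_ne _ hxc, slope_def_field, hc0, sub_zero]
    show divList L G x = _
    rw [ih2 x (fun d hd => hxne d (List.mem_cons_of_mem c hd)), hGx]
    rw [List.map_cons, List.prod_cons, div_div]

lemma poly_contDiff (p : Polynomial ℝ) : ContDiff ℝ ∞ (fun x : ℝ => p.eval x) := by
  induction p using Polynomial.induction_on' with
  | add p q hp hq => simpa [Polynomial.eval_add] using hp.add hq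
  | monomial n c =>
    simpa [Polynomial.eval_monomial] using (contDiff_const (c := c)).mul ((contDiff_id (𝕜 := ℝ)).pow n)

lemma iteratedDeriv_poly (p : Polynomial ℝ) (r : ℕ) :
    iteratedDeriv r (fun x : ℝ => p.eval x) = fun x => (Polynomial.derivative^[r] p).eval x := by
  induction r generalizing p with
  | zero => simp
  | succ r ihr =>
    rw [iteratedDeriv_succ', show deriv (fun x : ℝ => p.eval x) = fun x =>
      (Polynomial.derivative p).eval x from funext fun x => Polynomial.deriv p,
      ihr]
    simp [← Function.iterate_succ_apply, Function.iterate_succ_apply']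

lemma iteratedDeriv_sub' {f g : ℝ → ℝ} (hf : ContDiff ℝ ∞ f) (hg : ContDiff ℝ ∞ g) (n : ℕ)
    (x : ℝ) : iteratedDeriv n (fun y => f y - g y) x = iteratedDeriv n f x - iteratedDeriv n g x := by
  have : (fun y => f y - g y) = f - g := rfl
  rw [this, ← iteratedDerivWithin_univ, ← iteratedDerivWithin_univ, ← iteratedDerivWithin_univ]
  exact iteratedDerivWithin_sub (mem_univ x) uniqueDiffOn_univ
    ((hf.of_le (by exact_mod_cast le_top)).contDiffWithinAt) ((hg.of_le (by exact_mod_cast le_top)).contDiffWithinAt)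

lemma bind_count {ι : Type*} (l : List ι) (g : ι → List ℝ) (c : ℝ) :
    ((l.flatMap g).count c) = (l.map fun i => (g i).count c).sum := by
  induction l with
  | nil => simp
  | cons i l ih => simp [List.flatMap_cons, List.count_append, ih]

lemma bind_length {ι : Type*} (l : List ι) (g : ι → List ℝ) :
    (l.flatMap g).length = (l.map fun i => (g i).length).sum := by
  induction l with
  | nil => simp
  | cons i l ih => simp [List.flatMap_cons, ih]

lemma bind_prod {ι : Type*} (l : List ι) (g : ι → List ℝ) :
    (l.flatMap g).prod = (l.map fun i => (g i).prod).prod := by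
  induction l with
  | nil => simp
  | cons i l ih => simp [List.flatMap_cons, List.prod_append, ih]

/-- If `f` is absolutely monotonic on `(a,b)` and `p` is its Hermite interpolating polynomial
at distinct points `tᵢ ∈ [a,b]` to orders `kᵢ`, then `(f - p)/∏ (· - tᵢ)^{kᵢ}`, extended by
continuity at the `tᵢ`, is absolutely monotonic on `(a,b)`. -/
theorem stmt_4 (a b : ℝ) (hab : a < b) (f : ℝ → ℝ) (hf : ContDiff ℝ (⊤ : ℕ∞) f)
    (habs : ∀ n : ℕ, ∀ x ∈ Ioo a b, 0 ≤ iteratedDeriv n f x)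
    (m : ℕ) (hm : 0 < m) (t : Fin m → ℝ) (ht : ∀ i, t i ∈ Icc a b)
    (htinj : Function.Injective t) (k : Fin m → ℕ) (hk : ∀ i, 0 < k i)
    (p : Polynomial ℝ) (hdeg : p.degree < (∑ i, k i : ℕ))
    (hinterp : ∀ i, ∀ j < k i,
      iteratedDeriv j (fun x => p.eval x) (t i) = iteratedDeriv j f (t i)) :
    ∃ g : ℝ → ℝ, ContDiff ℝ (⊤ : ℕ∞) g ∧
      (∀ x, (∀ i, x ≠ t i) → g x = (f x - p.eval x) / ∏ i, (x - t i) ^ (k i)) ∧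
      ∀ n : ℕ, ∀ x ∈ Ioo a b, 0 ≤ iteratedDeriv n g x := by
  classical
  set F : ℝ → ℝ := fun x => f x - p.eval x with hFdef
  have hpoly := poly_contDiff p
  have hF : ContDiff ℝ (⊤ : ℕ∞) F := hf.sub hpoly
  set L := (List.finRange m).flatMap (fun i => List.replicate (k i) (t i)) with hL
  have hmemL : ∀ c ∈ L, ∃ i, c = t i := by
    intro c hc
    rw [hL, List.mem_flatMap] at hc
    obtain ⟨i, _, hci⟩ := hc
    exact ⟨i, List.eq_of_mem_replicate hci⟩
  have hcount : ∀ i, L.count (t i) = k i := by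
    intro i
    rw [hL, bind_count, ← List.ofFn_eq_map, List.sum_ofFn]
    have : ∀ j, (List.replicate (k j) (t j)).count (t i) = if i = j then k j else 0 := by
      intro j
      rw [List.count_replicate]
      by_cases h : i = j
      · subst h; simp
      · have : t i ≠ t j := fun he => h (htinj he)
        simp [Ne.symm this, h]
    simp only [this]
    rw [Finset.sum_ite_eq (Finset.univ) i (fun j => k j)]
    simp
  have hlen : L.length = ∑ i, k i := by
    rw [hL, bind_length, ← List.ofFn_eq_map, List.sum_ofFn]
    simp
  have hsumpos : 0 < ∑ i, k i :=
    Finset.sum_pos (fun i _ => hk i) ⟨⟨0, hm⟩, Finset.mem_univ _⟩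
  have hNdeg : p.natDegree < ∑ i, k i := by
    rcases eq_or_ne p 0 with rfl | hp0
    · simpa using hsumpos
    · exact (Polynomial.natDegree_lt_iff_degree_lt hp0).2 hdeg
  have hvanF : ∀ c ∈ L, ∀ r < L.count c, iteratedDeriv r F c = 0 := by
    intro c hc r hr
    obtain ⟨i, rfl⟩ := hmemL c hc
    rw [hcount i] at hr
    rw [hFdef, iteratedDeriv_sub' hf hpoly, hinterp i r hr, sub_self]
  have hposF : ∀ r : ℕ, L.length ≤ r → ∀ x ∈ Ioo a b, 0 ≤ iteratedDeriv r F x := by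
    intro r hr x hx
    rw [hlen] at hr
    rw [hFdef, iteratedDeriv_sub' hf hpoly, iteratedDeriv_poly,
      Polynomial.iterate_derivative_eq_zero (lt_of_lt_of_le hNdeg hr)]
    simpa using habs r x hx
  obtain ⟨h1, h2, h3⟩ := divList_main a b L F hF
    (fun c hc => (hmemL c hc).elim fun i hi => hi ▸ ht i) hvanF hposF
  refine ⟨divList L F, h1, ?_, h3⟩
  intro x hxne
  rw [h2 x (fun c hc => (hmemL c hc).elim fun i hi => fun hxe => hxne i (hi ▸ hxe))]
  show F x / _ = _
  congr 1
  rw [hL, List.map_flatMap, bind_prod, ← List.ofFn_eq_map, List.prod_ofFn]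
  congr 1
  funext i
  rw [List.map_replicate, List.prod_replicate]
end

section
/- Let μ be a positive Borel measure on ℝ with all polynomials integrable and with ∫p² dμ > 0 for every nonzero polynomial p, and let p₀,p₁,… be its monic orthogonal polynomials. Fix α ∈ ℝ and let r₁ < ⋯ < r_n be the (distinct real) roots of p_n + α p_{n−1}. Then for every k < n, the polynomial ∏_{i=1}^k (t − r_i) is a linear combination of p₀,…,p_k with all coefficients strictly positive. -/
/-!
Since `p n + α p (n - 1)` is orthogonal to every polynomial of degree `≤ n - 2`, interpolation at
its roots `r 0 < ⋯ < r (n - 1)` gives a quadrature rule that is exact up to degree `2n - 2` and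
whose weights `w i = ∫ ℓᵢ = ∫ ℓᵢ²` are positive. Hence `c j = ∫ q p j / ∫ (p j)²`, where
`q = ∏_{i<k} (X - r i)`, has the sign of the discrete sum `∑ w i q(r i) p j (r i)`.

That sum is positive by induction on the number of nodes. Multiplying the discrete functional
by `X - r 0` deletes the smallest node and keeps the weights positive, and turns `q` into the
analogous product over the remaining nodes. The monic orthogonal polynomials `Q m` of the new
functional are given by Christoffel's formula, and each `p j` is `Q j` plus a combination of
`Q 0, …, Q (j - 1)` with nonnegative coefficients, since `⟨p j, (X - r 0) Q m⟩ ≥ 0`.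
-/

open MeasureTheory Polynomial Finset

namespace OrthogonalPolynomial

section CommRing

variable {R : Type*} [CommRing R]

theorem degree_lt_of_natDegree_lt {f : R[X]} {n : ℕ} (h : f.natDegree < n) : f.degree < n :=
  degree_le_natDegree.trans_lt (by exact_mod_cast h)

theorem degree_sub_lt_of_monic {p q : R[X]} (hp : p.Monic) (hq : q.Monic)
    (h : p.natDegree = q.natDegree) : (p - q).degree < p.natDegree := by
  rw [degree_lt_iff_coeff_zero]
  intro m hm
  rcases hm.eq_or_lt with rfl | hlt
  · rw [coeff_sub, hp.coeff_natDegree, h, hq.coeff_natDegree, sub_self]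
  · rw [coeff_sub, coeff_eq_zero_of_natDegree_lt hlt, coeff_eq_zero_of_natDegree_lt (h ▸ hlt),
      sub_self]

theorem apply_C_mul (L : R[X] →ₗ[R] R) (a : R) (f : R[X]) : L (C a * f) = a * L f := by
  rw [← smul_eq_C_mul, map_smul, smul_eq_mul]

theorem exists_eq_sum_C_mul_of_degree_lt {P : ℕ → R[X]} {d : ℕ}
    (hmonic : ∀ m < d, (P m).Monic) (hdeg : ∀ m < d, (P m).natDegree = m)
    {f : R[X]} (hf : f.degree < d) : ∃ γ : ℕ → R, f = ∑ m ∈ range d, C (γ m) * P m := by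
  induction d generalizing f with
  | zero => exact ⟨0, by simpa using Nat.WithBot.lt_zero_iff.1 hf⟩
  | succ d ih =>
    rw [degree_lt_iff_coeff_zero] at hf
    obtain ⟨γ, hγ⟩ := ih (fun m hm => hmonic m (by omega)) (fun m hm => hdeg m (by omega))
      (f := f - C (f.coeff d) * P d) <| by
        rw [degree_lt_iff_coeff_zero]
        intro m hm
        rcases hm.eq_or_lt with rfl | hlt
        · have hlead := (hmonic d (by omega)).coeff_natDegree
          rw [hdeg d (by omega)] at hlead
          rw [coeff_sub, coeff_C_mul, hlead, mul_one, sub_self]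
        · have hPd : (P d).natDegree < m := by rw [hdeg d (by omega)]; exact hlt
          rw [coeff_sub, coeff_C_mul, hf m hlt, coeff_eq_zero_of_natDegree_lt hPd, mul_zero,
            sub_zero]
    refine ⟨Function.update γ d (f.coeff d), ?_⟩
    rw [sum_range_succ, Function.update_self,
      sum_congr rfl fun m hm => by rw [Function.update_of_ne (mem_range.1 hm).ne], ← hγ,
      sub_add_cancel]

structure IsMonicOrthogonal (L : R[X] →ₗ[R] R) (P : ℕ → R[X]) (N : ℕ) : Prop where
  monic : ∀ m < N, (P m).Monic
  natDegree_eq : ∀ m < N, (P m).natDegree = m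
  orthogonal : ∀ i < N, ∀ j < N, i ≠ j → L (P i * P j) = 0

namespace IsMonicOrthogonal

variable {L : R[X] →ₗ[R] R} {P : ℕ → R[X]} {N : ℕ}

theorem mono (hP : IsMonicOrthogonal L P N) {M : ℕ} (hMN : M ≤ N) : IsMonicOrthogonal L P M :=
  ⟨fun m hm => hP.monic m (by omega), fun m hm => hP.natDegree_eq m (by omega),
    fun i hi j hj => hP.orthogonal i (by omega) j (by omega)⟩

theorem exists_eq_sum (hP : IsMonicOrthogonal L P N) {d : ℕ} (hd : d ≤ N) {f : R[X]}
    (hf : f.degree < d) : ∃ γ : ℕ → R, f = ∑ m ∈ range d, C (γ m) * P m :=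
  exists_eq_sum_C_mul_of_degree_lt (fun m hm => hP.monic m (by omega))
    (fun m hm => hP.natDegree_eq m (by omega)) hf

theorem apply_sum_mul (hP : IsMonicOrthogonal L P N) {d : ℕ} (hd : d ≤ N) (γ : ℕ → R)
    {j : ℕ} (hj : j < d) : L ((∑ m ∈ range d, C (γ m) * P m) * P j) = γ j * L (P j * P j) := by
  rw [sum_mul, map_sum, sum_eq_single_of_mem j (mem_range.2 hj)]
  · rw [mul_assoc, apply_C_mul]
  · intro m hm hmj
    have hmd := mem_range.1 hm
    rw [mul_assoc, apply_C_mul, hP.orthogonal m (by omega) j (by omega) hmj, mul_zero]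

theorem apply_mul_eq_zero_of_degree_lt (hP : IsMonicOrthogonal L P N) {j : ℕ} (hj : j < N)
    {f : R[X]} (hf : f.degree < j) : L (f * P j) = 0 := by
  obtain ⟨γ, rfl⟩ := hP.exists_eq_sum hj.le hf
  rw [sum_mul, map_sum]
  refine sum_eq_zero fun m hm => ?_
  have hmj := mem_range.1 hm
  rw [mul_assoc, apply_C_mul, hP.orthogonal m (by omega) j hj hmj.ne, mul_zero]

theorem apply_monic_mul (hP : IsMonicOrthogonal L P N) {j : ℕ} (hj : j < N) {q : R[X]}
    (hq : q.Monic) (hqd : q.natDegree = j) : L (q * P j) = L (P j * P j) := by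
  have hlt := degree_sub_lt_of_monic hq (hP.monic j hj) (hqd.trans (hP.natDegree_eq j hj).symm)
  rw [hqd] at hlt
  rw [← sub_eq_zero, ← map_sub, ← sub_mul, hP.apply_mul_eq_zero_of_degree_lt hj hlt]

end IsMonicOrthogonal

end CommRing

def IsPosDefOnDegreeLT (L : ℝ[X] →ₗ[ℝ] ℝ) (N : ℕ) : Prop :=
  ∀ f : ℝ[X], f ≠ 0 → f.degree < N → 0 < L (f * f)

theorem IsMonicOrthogonal.apply_mul_self_pos {L : ℝ[X] →ₗ[ℝ] ℝ} {P : ℕ → ℝ[X]}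
    {N : ℕ} (hP : IsMonicOrthogonal L P N) (hL : IsPosDefOnDegreeLT L N) {m : ℕ} (hm : m < N) :
    0 < L (P m * P m) :=
  hL _ (hP.monic m hm).ne_zero (degree_lt_of_natDegree_lt (by rwa [hP.natDegree_eq m hm]))

noncomputable def christoffelFunctional (L : ℝ[X] →ₗ[ℝ] ℝ) (a : ℝ) :
    ℝ[X] →ₗ[ℝ] ℝ :=
  L ∘ₗ LinearMap.mulLeft ℝ (X - C a)

theorem christoffelFunctional_apply (L : ℝ[X] →ₗ[ℝ] ℝ) (a : ℝ) (f : ℝ[X]) :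
    christoffelFunctional L a f = L ((X - C a) * f) :=
  rfl

-- Christoffel's formula: the constant makes the numerator vanish at `a`, so the division is exact
-- whenever `(P m).eval a ≠ 0`.
noncomputable def christoffelFamily (P : ℕ → ℝ[X]) (a : ℝ) (m : ℕ) : ℝ[X] :=
  (P (m + 1) - C ((P (m + 1)).eval a / (P m).eval a) * P m) /ₘ (X - C a)

section Christoffel

variable {L : ℝ[X] →ₗ[ℝ] ℝ} {a : ℝ} {P : ℕ → ℝ[X]} {n : ℕ}

theorem IsMonicOrthogonal.eval_ne_zero (hP : IsMonicOrthogonal L P (n + 1))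
    (hLa : IsPosDefOnDegreeLT (christoffelFunctional L a) n) {m : ℕ} (hm : m < n + 1) :
    (P m).eval a ≠ 0 := by
  intro hroot
  set g := P m /ₘ (X - C a)
  have hPm := (hP.monic m hm).ne_zero
  have hfac : (X - C a) * g = P m := mul_divByMonic_eq_iff_isRoot.2 hroot
  have hg : g ≠ 0 := by
    rintro hg
    rw [hg, mul_zero] at hfac
    exact hPm hfac.symm
  have hgdeg : g.degree < m := by
    have := degree_divByMonic_lt (P m) (X - C a) hPm (by rw [degree_X_sub_C]; exact zero_lt_one)
    rwa [degree_eq_natDegree hPm, hP.natDegree_eq m hm] at this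
  have hpos := hLa g hg (hgdeg.trans_le (by exact_mod_cast Nat.lt_succ_iff.mp hm))
  rw [christoffelFunctional_apply, ← mul_assoc, hfac, mul_comm,
    hP.apply_mul_eq_zero_of_degree_lt hm hgdeg] at hpos
  exact hpos.false

theorem IsMonicOrthogonal.X_sub_C_mul_christoffelFamily (hP : IsMonicOrthogonal L P (n + 1))
    (hLa : IsPosDefOnDegreeLT (christoffelFunctional L a) n) {m : ℕ} (hm : m < n) :
    (X - C a) * christoffelFamily P a m
      = P (m + 1) - C ((P (m + 1)).eval a / (P m).eval a) * P m := by
  refine mul_divByMonic_eq_iff_isRoot.2 ?_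
  simp [div_mul_cancel₀ _ (hP.eval_ne_zero hLa (by omega : m < n + 1))]

theorem IsMonicOrthogonal.monic_sub_C_mul {N : ℕ} (hP : IsMonicOrthogonal L P N) {m : ℕ}
    (hm : m + 1 < N) (t : ℝ) :
    (P (m + 1) - C t * P m).Monic ∧ (P (m + 1) - C t * P m).natDegree = m + 1 := by
  have hlt : (C t * P m).natDegree < (P (m + 1)).natDegree := by
    rw [hP.natDegree_eq (m + 1) hm]
    exact (natDegree_C_mul_le t _).trans_lt (by rw [hP.natDegree_eq m (by omega)]; omega)
  exact ⟨(hP.monic (m + 1) hm).sub_of_left (degree_lt_degree hlt),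
    (natDegree_sub_eq_left_of_natDegree_lt hlt).trans (hP.natDegree_eq (m + 1) hm)⟩

theorem IsMonicOrthogonal.isMonicOrthogonal_christoffelFamily
    (hP : IsMonicOrthogonal L P (n + 1))
    (hLa : IsPosDefOnDegreeLT (christoffelFunctional L a) n) :
    IsMonicOrthogonal (christoffelFunctional L a) (christoffelFamily P a) n := by
  have hmul := fun m (hm : m < n) => hP.X_sub_C_mul_christoffelFamily hLa hm
  have hsub := fun m (hm : m < n) =>
    hP.monic_sub_C_mul (by omega : m + 1 < n + 1) ((P (m + 1)).eval a / (P m).eval a)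
  have hmonic : ∀ m < n, (christoffelFamily P a m).Monic := fun m hm =>
    (monic_X_sub_C a).of_mul_monic_left (hmul m hm ▸ (hsub m hm).1)
  have hdeg : ∀ m < n, (christoffelFamily P a m).natDegree = m := fun m hm => by
    have := (monic_X_sub_C a).natDegree_mul (hmonic m hm)
    rw [hmul m hm, (hsub m hm).2, natDegree_X_sub_C] at this
    omega
  have horth : ∀ i < n, ∀ j < i,
      christoffelFunctional L a (christoffelFamily P a i * christoffelFamily P a j) = 0 := by
    intro i hi j hji
    have hQj := degree_lt_of_natDegree_lt (hdeg j (by omega) ▸ hji)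
    have hQj' : (christoffelFamily P a j).degree < ↑(i + 1) :=
      hQj.trans (by exact_mod_cast i.lt_succ_self)
    rw [christoffelFunctional_apply, ← mul_assoc, hmul i hi, sub_mul, map_sub, mul_assoc,
      apply_C_mul, mul_comm, mul_comm (P i), hP.apply_mul_eq_zero_of_degree_lt (by omega) hQj',
      hP.apply_mul_eq_zero_of_degree_lt (by omega) hQj, mul_zero, sub_zero]
  refine ⟨hmonic, hdeg, fun i hi j hj hij => ?_⟩
  rcases hij.lt_or_gt with hlt | hlt
  · rw [mul_comm]
    exact horth j hj i hlt
  · exact horth i hi j hlt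

theorem IsMonicOrthogonal.exists_eq_christoffelFamily_add_sum
    (hP : IsMonicOrthogonal L P (n + 1)) (hL : IsPosDefOnDegreeLT L (n + 1))
    (hLa : IsPosDefOnDegreeLT (christoffelFunctional L a) n) {j : ℕ} (hj : j < n) :
    ∃ γ : ℕ → ℝ, (∀ m < j, 0 ≤ γ m) ∧
      P j = christoffelFamily P a j + ∑ m ∈ range j, C (γ m) * christoffelFamily P a m := by
  have hQ := hP.isMonicOrthogonal_christoffelFamily hLa
  have hlt := degree_sub_lt_of_monic (hP.monic j (by omega)) (hQ.monic j hj)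
    ((hP.natDegree_eq j (by omega)).trans (hQ.natDegree_eq j hj).symm)
  rw [hP.natDegree_eq j (by omega)] at hlt
  obtain ⟨γ, hγ⟩ := hQ.exists_eq_sum hj.le hlt
  refine ⟨γ, fun m hm => ?_, by rw [← hγ, add_sub_cancel]⟩
  have hcoeff := hQ.apply_sum_mul hj.le γ hm
  rw [← hγ, sub_mul, map_sub, hQ.orthogonal j hj m (by omega) (by omega), sub_zero,
    christoffelFunctional_apply, mul_left_comm, hP.X_sub_C_mul_christoffelFamily hLa (by omega),
    mul_sub, map_sub, mul_left_comm, apply_C_mul,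
    hP.orthogonal j (by omega) m (by omega) (by omega), mul_zero, sub_zero] at hcoeff
  -- `L (P j * P (m + 1))` vanishes unless `m + 1 = j`, where it is a square norm.
  have hnonneg : 0 ≤ L (P j * P (m + 1)) := by
    rcases eq_or_ne j (m + 1) with h | h
    · exact h ▸ (hP.apply_mul_self_pos hL (by omega)).le
    · exact (hP.orthogonal j (by omega) (m + 1) (by omega) h).ge
  exact nonneg_of_mul_nonneg_left (hcoeff ▸ hnonneg) (hQ.apply_mul_self_pos hLa (by omega))

end Christoffel

noncomputable def nodeSum (r w : ℕ → ℝ) (n : ℕ) : ℝ[X] →ₗ[ℝ] ℝ :=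
  ∑ i ∈ range n, w i • leval (r i)

theorem nodeSum_apply (r w : ℕ → ℝ) (n : ℕ) (f : ℝ[X]) :
    nodeSum r w n f = ∑ i ∈ range n, w i * f.eval (r i) := by
  simp [nodeSum]

theorem isPosDefOnDegreeLT_nodeSum {r w : ℕ → ℝ} {n : ℕ} (hr : Set.InjOn r (Set.Iio n))
    (hw : ∀ i < n, 0 < w i) : IsPosDefOnDegreeLT (nodeSum r w n) n := by
  intro f hf hdeg
  rw [← coe_range] at hr
  obtain ⟨i, hi, hfi⟩ : ∃ i ∈ range n, f.eval (r i) ≠ 0 := by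
    by_contra! h
    exact hf (eq_zero_of_degree_lt_of_eval_index_eq_zero _ hr (by simpa) h)
  rw [nodeSum_apply]
  refine sum_pos' (fun i hi => ?_) ⟨i, hi, ?_⟩
  · rw [eval_mul]
    exact mul_nonneg (hw i (mem_range.1 hi)).le (mul_self_nonneg _)
  · rw [eval_mul]
    exact mul_pos (hw i (mem_range.1 hi)) (mul_self_pos.2 hfi)

theorem christoffelFunctional_nodeSum (r w : ℕ → ℝ) (n : ℕ) :
    christoffelFunctional (nodeSum r w (n + 1)) (r 0)
      = nodeSum (fun i => r (i + 1)) (fun i => w (i + 1) * (r (i + 1) - r 0)) n := by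
  refine LinearMap.ext fun f => ?_
  simp only [christoffelFunctional_apply, nodeSum_apply, sum_range_succ', eval_mul, eval_sub,
    eval_X, eval_C, sub_self, zero_mul, mul_zero, add_zero]
  exact sum_congr rfl fun i _ => by ring

theorem nodal_range_succ (r : ℕ → ℝ) (k : ℕ) :
    Lagrange.nodal (range (k + 1)) r
      = (X - C (r 0)) * Lagrange.nodal (range k) (fun i => r (i + 1)) := by
  rw [Lagrange.nodal, prod_range_succ', mul_comm]
  rfl

theorem nodeSum_nodal_mul_pos {n : ℕ} {r w : ℕ → ℝ} {P : ℕ → ℝ[X]}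
    (hr : StrictMonoOn r (Set.Iio n)) (hw : ∀ i < n, 0 < w i)
    (hP : IsMonicOrthogonal (nodeSum r w n) P n) {j k : ℕ} (hjk : j ≤ k) (hk : k < n) :
    0 < nodeSum r w n (Lagrange.nodal (range k) r * P j) := by
  induction n generalizing r w P j k with
  | zero => omega
  | succ n ih =>
    have hL := isPosDefOnDegreeLT_nodeSum hr.injOn hw
    rcases hjk.eq_or_lt with rfl | hjk
    · rw [hP.apply_monic_mul hk Lagrange.nodal_monic (by simp)]
      exact hP.apply_mul_self_pos hL hk
    obtain ⟨k, rfl⟩ : ∃ k', k = k' + 1 := ⟨k - 1, by omega⟩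
    have hr' : StrictMonoOn (fun i => r (i + 1)) (Set.Iio n) := fun i hi l hl hil =>
      hr (by simp at hi ⊢; omega) (by simp at hl ⊢; omega) (by omega)
    have hw' : ∀ i < n, 0 < w (i + 1) * (r (i + 1) - r 0) := fun i hi =>
      mul_pos (hw _ (by omega)) (sub_pos.2 (hr (by simp) (by simp; omega) (by omega)))
    have hLa : IsPosDefOnDegreeLT (christoffelFunctional (nodeSum r w (n + 1)) (r 0)) n := by
      rw [christoffelFunctional_nodeSum]
      exact isPosDefOnDegreeLT_nodeSum hr'.injOn hw'
    have hQ := hP.isMonicOrthogonal_christoffelFamily hLa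
    rw [christoffelFunctional_nodeSum] at hQ
    have ih' := fun {j'} (hj' : j' ≤ k) => ih hr' hw' hQ hj' (by omega)
    obtain ⟨γ, hγ, hPj⟩ := hP.exists_eq_christoffelFamily_add_sum hL hLa (by omega : j < n)
    rw [nodal_range_succ, mul_assoc, ← christoffelFunctional_apply,
      christoffelFunctional_nodeSum, hPj, mul_add, map_add, mul_sum, map_sum]
    refine add_pos_of_pos_of_nonneg (ih' (by omega)) (sum_nonneg fun m hm => ?_)
    rw [mul_left_comm, apply_C_mul]
    exact mul_nonneg (hγ m (mem_range.1 hm)) (ih' (by simp at hm; omega)).le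

theorem apply_eq_nodeSum_of_apply_nodal_mul_eq_zero {L : ℝ[X] →ₗ[ℝ] ℝ} {r : ℕ → ℝ}
    {n m : ℕ} (hr : Set.InjOn r (Set.Iio n))
    (hL : ∀ u : ℝ[X], u.degree < m → L (Lagrange.nodal (range n) r * u) = 0)
    {f : ℝ[X]} (hf : f.degree < ↑(n + m)) :
    L f = nodeSum r (fun i => L (Lagrange.basis (range n) r i)) n f := by
  rw [← coe_range] at hr
  set π := Lagrange.nodal (range n) r
  have hπ : π.Monic := Lagrange.nodal_monic
  have hπn : π.natDegree = n := by simp [π]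
  have hdiv : (f /ₘ π).degree < m := by
    by_cases h : f /ₘ π = 0
    · rw [h, degree_zero]
      exact WithBot.bot_lt_coe m
    have hf0 : f ≠ 0 := by
      rintro rfl
      simp at h
    have hnf : π.natDegree ≤ f.natDegree :=
      natDegree_le_natDegree (not_lt.1 (mt (divByMonic_eq_zero_iff hπ).2 h))
    rw [← natDegree_lt_iff_degree_lt hf0] at hf
    rw [degree_eq_natDegree h, natDegree_divByMonic f hπ, Nat.cast_lt]
    omega
  have hmod : f %ₘ π = Lagrange.interpolate (range n) r (fun i => f.eval (r i)) := by
    refine Lagrange.eq_interpolate_of_eval_eq _ hr ?_ fun i hi => ?_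
    · simpa [π] using degree_modByMonic_lt f hπ
    · rw [modByMonic_eq_sub_mul_div, eval_sub, eval_mul, Lagrange.eval_nodal_at_node hi,
        zero_mul, sub_zero]
  conv_lhs => rw [← modByMonic_add_div f π]
  rw [map_add, hL _ hdiv, add_zero, hmod, Lagrange.interpolate_apply, map_sum, nodeSum_apply]
  exact sum_congr rfl fun i _ => by rw [apply_C_mul, mul_comm]

theorem exists_pos_quadrature {L : ℝ[X] →ₗ[ℝ] ℝ} {r : ℕ → ℝ} {n m : ℕ}
    (hr : Set.InjOn r (Set.Iio n))
    (hL : ∀ u : ℝ[X], u.degree < m → L (Lagrange.nodal (range n) r * u) = 0)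
    (hnm : n ≤ m + 1) (hpos : IsPosDefOnDegreeLT L n) :
    ∃ w : ℕ → ℝ, (∀ i < n, 0 < w i) ∧
      ∀ f : ℝ[X], f.degree < ↑(n + m) → L f = nodeSum r w n f := by
  refine ⟨_, fun i hi => ?_, fun f hf => apply_eq_nodeSum_of_apply_nodal_mul_eq_zero hr hL hf⟩
  rw [← coe_range] at hr
  have hi' := mem_range.2 hi
  set b := Lagrange.basis (range n) r i
  have hb : b.degree = ↑(n - 1) := by rw [Lagrange.degree_basis hr hi', card_range]
  have hbb : (b * b).degree < ↑(n + m) := by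
    rw [degree_mul, hb]
    exact_mod_cast (by omega : n - 1 + (n - 1) < n + m)
  -- Exactness on `b * b` gives `L (b * b) = w i`, and the left side is positive.
  have hsq := hpos b (Lagrange.basis_ne_zero hr hi') (by rw [hb]; exact_mod_cast (by omega))
  rw [apply_eq_nodeSum_of_apply_nodal_mul_eq_zero (coe_range n ▸ hr) hL hbb, nodeSum_apply,
    sum_eq_single_of_mem i hi'] at hsq
  · rwa [eval_mul, Lagrange.eval_basis_self hr hi', mul_one, mul_one] at hsq
  · intro l hl hli
    rw [eval_mul, Lagrange.eval_basis_of_ne hli.symm hl, mul_zero, mul_zero]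

theorem IsMonicOrthogonal.exists_pos_coeff_nodal_eq_sum {L : ℝ[X] →ₗ[ℝ] ℝ} {p : ℕ → ℝ[X]}
    {n : ℕ} {r : ℕ → ℝ} (hp : IsMonicOrthogonal L p (n + 1)) (hL : IsPosDefOnDegreeLT L n)
    (hr : StrictMonoOn r (Set.Iio n)) (α : ℝ)
    (hroots : p n + C α * p (n - 1) = Lagrange.nodal (range n) r) {k : ℕ} (hk : k < n) :
    ∃ c : ℕ → ℝ, (∀ j ≤ k, 0 < c j) ∧
      Lagrange.nodal (range k) r = ∑ j ∈ range (k + 1), C (c j) * p j := by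
  have hnodal : ∀ u : ℝ[X], u.degree < ↑(n - 1) → L (Lagrange.nodal (range n) r * u) = 0 := by
    intro u hu
    rw [← hroots, add_mul, map_add, mul_assoc, apply_C_mul, mul_comm, mul_comm (p (n - 1)),
      hp.apply_mul_eq_zero_of_degree_lt (by omega) hu,
      hp.apply_mul_eq_zero_of_degree_lt n.lt_succ_self
        (hu.trans_le (by exact_mod_cast n.sub_le 1)), mul_zero, zero_add]
  obtain ⟨w, hw, hquad⟩ := exists_pos_quadrature hr.injOn hnodal (by omega) hL
  have hexact : ∀ {f g : ℝ[X]}, f.Monic → g.Monic → f.natDegree < n → g.natDegree < n →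
      L (f * g) = nodeSum r w n (f * g) := fun hf hg hfn hgn => hquad _ <| by
    rw [degree_eq_natDegree (hf.mul hg).ne_zero, hf.natDegree_mul hg]
    exact_mod_cast (by omega)
  have hp' := hp.mono n.le_succ
  have hpw : IsMonicOrthogonal (nodeSum r w n) p n := by
    refine ⟨hp'.monic, hp'.natDegree_eq, fun i hi j hj hij => ?_⟩
    rw [← hexact (hp'.monic i hi) (hp'.monic j hj) (by rwa [hp'.natDegree_eq i hi])
      (by rwa [hp'.natDegree_eq j hj]), hp'.orthogonal i hi j hj hij]
  obtain ⟨c, hc⟩ := hp.exists_eq_sum (d := k + 1) (f := Lagrange.nodal (range k) r) (by omega)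
    (by rw [Lagrange.degree_nodal, card_range]; exact_mod_cast k.lt_succ_self)
  refine ⟨c, fun j hj => ?_, hc⟩
  have hpos := nodeSum_nodal_mul_pos hr hw hpw hj hk
  rw [← hexact Lagrange.nodal_monic (hp'.monic j (by omega)) (by simpa using hk)
    (by rw [hp'.natDegree_eq j (by omega)]; omega), hc,
    hp.apply_sum_mul (by omega) c (by omega)] at hpos
  exact pos_of_mul_pos_left hpos (hp'.apply_mul_self_pos hL (by omega)).le

noncomputable def polynomialIntegral (μ : Measure ℝ)
    (hint : ∀ q : ℝ[X], Integrable (fun x => q.eval x) μ) : ℝ[X] →ₗ[ℝ] ℝ where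
  toFun q := ∫ x, q.eval x ∂μ
  map_add' f g := by
    simp only [eval_add]
    exact integral_add (hint f) (hint g)
  map_smul' c f := by
    simp only [eval_smul, smul_eq_mul, RingHom.id_apply]
    exact integral_const_mul c _

end OrthogonalPolynomial

open OrthogonalPolynomial in
theorem stmt_6_general (μ : Measure ℝ)
    (hint : ∀ q : Polynomial ℝ, Integrable (fun x => q.eval x) μ)
    (hpos : ∀ q : Polynomial ℝ, q ≠ 0 → 0 < ∫ x, (q.eval x) ^ 2 ∂μ)
    (p : ℕ → Polynomial ℝ) (hmonic : ∀ i, (p i).Monic) (hdeg : ∀ i, (p i).natDegree = i)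
    (horth : ∀ i j, i ≠ j → ∫ x, (p i).eval x * (p j).eval x ∂μ = 0)
    (n : ℕ) (α : ℝ) (r : ℕ → ℝ)
    (hsort : ∀ i j, i < j → j < n → r i < r j)
    (hroots : p n + C α * p (n - 1) = ∏ i ∈ Finset.range n, (X - C (r i))) :
    ∀ k < n, ∃ c : ℕ → ℝ, (∀ j ≤ k, 0 < c j) ∧
      ∏ i ∈ Finset.range k, (X - C (r i)) =
        ∑ j ∈ Finset.range (k + 1), C (c j) * p j := by
  intro k hk
  have hp : IsMonicOrthogonal (polynomialIntegral μ hint) p (n + 1) :=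
    ⟨fun m _ => hmonic m, fun m _ => hdeg m, fun i _ j _ hij => by
      simpa [polynomialIntegral] using horth i j hij⟩
  have hL : IsPosDefOnDegreeLT (polynomialIntegral μ hint) n := fun q hq _ => by
    simpa [polynomialIntegral, sq] using hpos q hq
  exact hp.exists_pos_coeff_nodal_eq_sum hL (fun i hi j hj hij => hsort i j hij hj) α hroots hk

/-- Theorem on orthogonal polynomials: if `r₁ < ⋯ < r_n` are the roots of `p_n + α p_{n-1}`
(monic orthogonal polynomials for `μ`), then for `k < n`, `∏_{i=1}^k (t - rᵢ)` is a strictly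
positive combination of `p₀, …, p_k`. -/
theorem stmt_6 (μ : Measure ℝ)
    (hint : ∀ q : Polynomial ℝ, Integrable (fun x => q.eval x) μ)
    (hpos : ∀ q : Polynomial ℝ, q ≠ 0 → 0 < ∫ x, (q.eval x) ^ 2 ∂μ)
    (p : ℕ → Polynomial ℝ) (hmonic : ∀ i, (p i).Monic) (hdeg : ∀ i, (p i).natDegree = i)
    (horth : ∀ i j, i ≠ j → ∫ x, (p i).eval x * (p j).eval x ∂μ = 0)
    (n : ℕ) (hn : 1 ≤ n) (α : ℝ) (r : ℕ → ℝ)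
    (hsort : ∀ i j, i < j → j < n → r i < r j)
    (hroots : p n + C α * p (n - 1) = ∏ i ∈ Finset.range n, (X - C (r i))) :
    ∀ k < n, ∃ c : ℕ → ℝ, (∀ j ≤ k, 0 < c j) ∧
      ∏ i ∈ Finset.range k, (X - C (r i)) =
        ∑ j ∈ Finset.range (k + 1), C (c j) * p j :=
  stmt_6_general μ hint hpos p hmonic hdeg horth n α r hsort hroots
end

section
/- (Christoffel-type expansion) Let μ be a positive measure on ℝ with monic orthogonal polynomials p₀,p₁,…, let α ∈ ℝ, and let r be the largest root of p_n + α p_{n−1}. Then (p_n(t) + α p_{n−1}(t))/(t − r) is a linear combination of p₀(t),…,p_{n−1}(t) with all coefficients strictly positive. -/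
/-!
Write `q = p (m + 1) + α p m = (X - r) s`. As `q` is orthogonal to every polynomial of degree
`< m`, writing `f = f(r) + (X - r) h` gives `⟨f, s⟩ = f(r) ∫ s` for every `f` of degree `≤ m`.
Hence the coefficient of `p j` in `s` is `p_j(r) ∫ s / ‖p j‖²`, and taking `f = p m`, which pairs
with the monic `s` to `‖p m‖²`, shows that `∫ s` has the sign of `p_m(r)`. So everything reduces
to `p_j(r) > 0` for `j ≤ m`.

That positivity comes from the Wronskians `W(p k, p (k + 1))`, which are everywhere positive:
by the three-term recurrence `W_{k+1} = p_{k+1}² + b W_k` with `b > 0`. A monic `g` with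
`W(g, f) > 0` cannot have a root `≥ r` if `f ≥ 0` on `[r, ∞)`, since at its largest root
`g' ≥ 0` and there `W(g, f) = -g' f ≤ 0`. Starting from `f = q`, which is `≥ 0` to the right
of its largest root `r`, this descends from `p m` to `p 0`.
-/

open MeasureTheory Polynomial Filter

namespace Polynomial

theorem Monic.degree_sub_lt {R : Type*} [Ring R] [Nontrivial R] {f g : R[X]} (hf : f.Monic)
    (hg : g.Monic) {k : ℕ} (hfk : f.natDegree = k) (hgk : g.natDegree = k) :
    (f - g).degree < k := by
  rw [← hfk, ← degree_eq_natDegree hf.ne_zero]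
  refine degree_sub_lt_left ?_ hf.ne_zero (by rw [hf.leadingCoeff, hg.leadingCoeff])
  rw [degree_eq_natDegree hf.ne_zero, degree_eq_natDegree hg.ne_zero, hfk, hgk]

theorem exists_eq_sum_C_mul_of_degree_lt {R : Type*} [Ring R] {p : ℕ → R[X]}
    (hmonic : ∀ i, (p i).Monic) (hdeg : ∀ i, (p i).natDegree = i) {m : ℕ} {u : R[X]}
    (hu : u.degree < m) : ∃ c : ℕ → R, u = ∑ j ∈ Finset.range m, C (c j) * p j := by
  induction m generalizing u with
  | zero => exact ⟨0, by simpa using hu⟩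
  | succ m ih =>
    obtain ⟨c, hc⟩ := ih (u := u - C (u.coeff m) * p m) <| by
      rw [degree_lt_iff_coeff_zero] at hu ⊢
      intro k hk
      rcases hk.eq_or_lt with rfl | hk'
      · simp [hdeg m ▸ (hmonic m).coeff_natDegree]
      · simp [hu k hk', coeff_eq_zero_of_natDegree_lt (hdeg m ▸ hk')]
    refine ⟨Function.update c m (u.coeff m), ?_⟩
    rw [Finset.sum_range_succ, Function.update_self,
      Finset.sum_congr rfl fun j hj => by
        rw [Function.update_of_ne (Finset.mem_range.1 hj).ne], ← hc]
    exact (sub_add_cancel _ _).symm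

theorem Monic.eval_pos_of_forall_isRoot_lt {g : ℝ[X]} (hg : g.Monic) {x : ℝ}
    (hx : ∀ y, g.IsRoot y → y < x) : 0 < g.eval x := by
  by_contra! hneg
  rcases Nat.eq_zero_or_pos g.natDegree with h0 | hdeg
  · rw [hg.natDegree_eq_zero.1 h0, eval_one] at hneg
    linarith
  have htop := tendsto_atTop_of_leadingCoeff_nonneg g (natDegree_pos_iff_degree_pos.1 hdeg)
    (by rw [hg.leadingCoeff]; exact zero_le_one)
  obtain ⟨y, hy, hxy⟩ := ((htop.eventually_gt_atTop 0).and (eventually_ge_atTop x)).exists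
  obtain ⟨z, hz, hz0⟩ := intermediate_value_Icc hxy g.continuous.continuousOn ⟨hneg, hy.le⟩
  exact (hx z hz0).not_ge hz.1

theorem Monic.eval_derivative_nonneg_of_isMaxRoot {g : ℝ[X]} (hg : g.Monic) {t : ℝ}
    (ht : g.IsRoot t) (hmax : ∀ y, g.IsRoot y → y ≤ t) : 0 ≤ g.derivative.eval t := by
  set h := g /ₘ (X - C t)
  have hgh : (X - C t) * h = g := mul_divByMonic_eq_iff_isRoot.2 ht
  have hh : ∀ x, t < x → 0 < h.eval x := fun x hx => by
    have hgx := hg.eval_pos_of_forall_isRoot_lt fun y hy => (hmax y hy).trans_lt hx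
    rw [← hgh, eval_mul, eval_sub, eval_X, eval_C] at hgx
    exact pos_of_mul_pos_right hgx (sub_pos.2 hx).le
  have hderiv : g.derivative.eval t = h.eval t := by
    rw [← hgh]
    simp
  rw [hderiv]
  exact ge_of_tendsto (h.continuous.tendsto t |>.mono_left nhdsWithin_le_nhds)
    (eventually_nhdsWithin_of_forall (s := Set.Ioi t) fun x hx => (hh x hx).le)

theorem Monic.eval_pos_of_wronskian_pos {f g : ℝ[X]} (hg : g.Monic) {r : ℝ}
    (hW : ∀ x, 0 < (wronskian g f).eval x) (hf : ∀ x, r ≤ x → 0 ≤ f.eval x) {x : ℝ}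
    (hx : r ≤ x) : 0 < g.eval x := by
  refine hg.eval_pos_of_forall_isRoot_lt fun y hy => ?_
  by_contra! hxy
  obtain ⟨t, ht, htmax⟩ := g.roots.toFinset.exists_max_image id
    ⟨y, by simpa [hg.ne_zero] using hy⟩
  simp only [Multiset.mem_toFinset, mem_roots hg.ne_zero, id] at ht htmax
  have hg't := hg.eval_derivative_nonneg_of_isMaxRoot ht htmax
  have hft := hf t (by linarith [htmax y hy])
  have hWt := hW t
  rw [wronskian, eval_sub, eval_mul, eval_mul, ht.eq_zero] at hWt
  nlinarith

end Polynomial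

noncomputable def polyInner (μ : Measure ℝ) (f g : ℝ[X]) : ℝ :=
  ∫ x, f.eval x * g.eval x ∂μ

section polyInner

variable {μ : Measure ℝ}

theorem polyInner_comm (f g : ℝ[X]) : polyInner μ f g = polyInner μ g f := by
  simp only [polyInner, mul_comm]

theorem polyInner_mul_left (f g h : ℝ[X]) : polyInner μ (f * g) h = polyInner μ g (f * h) := by
  simp only [polyInner, eval_mul]
  congr 1 with x
  ring

theorem polyInner_C_left (a : ℝ) (f : ℝ[X]) : polyInner μ (C a) f = a * ∫ x, f.eval x ∂μ := by
  simp only [polyInner, eval_C, integral_const_mul]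

theorem polyInner_C_mul_right (f g : ℝ[X]) (a : ℝ) :
    polyInner μ f (C a * g) = a * polyInner μ f g := by
  simp only [polyInner, eval_mul, eval_C, mul_left_comm _ a, integral_const_mul]

theorem integrable_eval_mul_eval (hint : ∀ q : ℝ[X], Integrable (fun x => q.eval x) μ)
    (f g : ℝ[X]) : Integrable (fun x => f.eval x * g.eval x) μ := by
  simpa only [eval_mul] using hint (f * g)

theorem polyInner_add_right (hint : ∀ q : ℝ[X], Integrable (fun x => q.eval x) μ)
    (f g h : ℝ[X]) : polyInner μ f (g + h) = polyInner μ f g + polyInner μ f h := by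
  simp only [polyInner, eval_add, mul_add]
  exact integral_add (integrable_eval_mul_eval hint f g) (integrable_eval_mul_eval hint f h)

theorem polyInner_sub_right (hint : ∀ q : ℝ[X], Integrable (fun x => q.eval x) μ)
    (f g h : ℝ[X]) : polyInner μ f (g - h) = polyInner μ f g - polyInner μ f h := by
  simp only [polyInner, eval_sub, mul_sub]
  exact integral_sub (integrable_eval_mul_eval hint f g) (integrable_eval_mul_eval hint f h)

theorem polyInner_sum_right (hint : ∀ q : ℝ[X], Integrable (fun x => q.eval x) μ)
    {ι : Type*} (s : Finset ι) (f : ℝ[X]) (g : ι → ℝ[X]) :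
    polyInner μ f (∑ i ∈ s, g i) = ∑ i ∈ s, polyInner μ f (g i) := by
  simp only [polyInner, eval_finsetSum, Finset.mul_sum]
  exact integral_finsetSum s fun i _ => integrable_eval_mul_eval hint f (g i)

theorem polyInner_divByMonic_X_sub_C (hint : ∀ q : ℝ[X], Integrable (fun x => q.eval x) μ)
    {q f : ℝ[X]} {r : ℝ} {m : ℕ} (hr : q.IsRoot r)
    (hq : ∀ h : ℝ[X], h.degree < m → polyInner μ h q = 0) (hf : f.degree ≤ m) :
    polyInner μ f (q /ₘ (X - C r)) = f.eval r * ∫ x, (q /ₘ (X - C r)).eval x ∂μ := by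
  set h := f /ₘ (X - C r)
  have hfh : f = C (f.eval r) + (X - C r) * h := by
    rw [← modByMonic_X_sub_C_eq_C_eval, modByMonic_add_div]
  have hh : h.degree < m := by
    rcases eq_or_ne f 0 with rfl | hf0
    · simp [h]
    · exact (degree_divByMonic_lt f _ hf0 (by rw [degree_X_sub_C]; exact zero_lt_one)).trans_le hf
  conv_lhs => rw [polyInner_comm, hfh]
  rw [polyInner_add_right hint, polyInner_comm, polyInner_C_left, polyInner_comm,
    polyInner_mul_left, mul_divByMonic_eq_iff_isRoot.2 hr, hq h hh, add_zero]

end polyInner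

structure IsMonicOrthogonal (μ : Measure ℝ) (p : ℕ → ℝ[X]) : Prop where
  monic : ∀ i, (p i).Monic
  natDegree_eq : ∀ i, (p i).natDegree = i
  polyInner_eq_zero : ∀ i j, i ≠ j → polyInner μ (p i) (p j) = 0
  polyInner_self_pos : ∀ i, 0 < polyInner μ (p i) (p i)

namespace IsMonicOrthogonal

variable {μ : Measure ℝ} {p : ℕ → ℝ[X]}

theorem polyInner_eq_zero_of_degree_lt (hint : ∀ q : ℝ[X], Integrable (fun x => q.eval x) μ)
    (hp : IsMonicOrthogonal μ p) {k : ℕ} {u : ℝ[X]} (hu : u.degree < k) :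
    polyInner μ (p k) u = 0 := by
  obtain ⟨c, rfl⟩ := exists_eq_sum_C_mul_of_degree_lt hp.monic hp.natDegree_eq hu
  rw [polyInner_sum_right hint]
  refine Finset.sum_eq_zero fun j hj => ?_
  rw [polyInner_C_mul_right, hp.polyInner_eq_zero k j (Finset.mem_range.1 hj).ne', mul_zero]

theorem eq_sum_polyInner (hint : ∀ q : ℝ[X], Integrable (fun x => q.eval x) μ)
    (hp : IsMonicOrthogonal μ p) {m : ℕ} {u : ℝ[X]} (hu : u.degree < m) :
    u = ∑ j ∈ Finset.range m, C (polyInner μ u (p j) / polyInner μ (p j) (p j)) * p j := by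
  obtain ⟨c, hc⟩ := exists_eq_sum_C_mul_of_degree_lt hp.monic hp.natDegree_eq hu
  have hcoeff : ∀ j < m, polyInner μ u (p j) = c j * polyInner μ (p j) (p j) := fun j hj => by
    rw [polyInner_comm, hc, polyInner_sum_right hint,
      Finset.sum_eq_single_of_mem j (Finset.mem_range.2 hj), polyInner_C_mul_right]
    intro i _ hij
    rw [polyInner_C_mul_right, hp.polyInner_eq_zero j i hij.symm, mul_zero]
  conv_lhs => rw [hc]
  refine Finset.sum_congr rfl fun j hj => ?_
  rw [hcoeff j (Finset.mem_range.1 hj), mul_div_cancel_right₀ _ (hp.polyInner_self_pos j).ne']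

theorem polyInner_eq_of_monic (hint : ∀ q : ℝ[X], Integrable (fun x => q.eval x) μ)
    (hp : IsMonicOrthogonal μ p) {k : ℕ} {u : ℝ[X]} (hu : u.Monic) (huk : u.natDegree = k) :
    polyInner μ (p k) u = polyInner μ (p k) (p k) := by
  have h := hp.polyInner_eq_zero_of_degree_lt hint
    (hu.degree_sub_lt (hp.monic k) huk (hp.natDegree_eq k))
  rwa [polyInner_sub_right hint, sub_eq_zero] at h

theorem exists_recurrence (hint : ∀ q : ℝ[X], Integrable (fun x => q.eval x) μ)
    (hp : IsMonicOrthogonal μ p) (k : ℕ) :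
    ∃ a b : ℝ, 0 < b ∧ p (k + 2) = (X - C a) * p (k + 1) - C b * p k := by
  have hX : ∀ i, (X * p i).natDegree = i + 1 := fun i => by
    rw [natDegree_X_mul (hp.monic i).ne_zero, hp.natDegree_eq]
  set u := X * p (k + 1) - p (k + 2) with hu_def
  have hu : u.degree < ↑(k + 2) :=
    (monic_X.mul (hp.monic _)).degree_sub_lt (hp.monic _) (hX _) (hp.natDegree_eq _)
  have hlow : ∀ j < k, polyInner μ u (p j) = 0 := fun j hj => by
    have hXj : (X * p j).degree < ↑(k + 1) := by
      rw [degree_eq_natDegree (monic_X.mul (hp.monic j)).ne_zero, hX]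
      exact_mod_cast (by omega : j + 1 < k + 1)
    rw [polyInner_comm, polyInner_sub_right hint, polyInner_comm, polyInner_mul_left,
      hp.polyInner_eq_zero_of_degree_lt hint hXj, hp.polyInner_eq_zero j (k + 2) (by omega),
      sub_zero]
  have hk : polyInner μ u (p k) = polyInner μ (p (k + 1)) (p (k + 1)) := by
    rw [polyInner_comm, polyInner_sub_right hint, polyInner_comm, polyInner_mul_left,
      hp.polyInner_eq_of_monic hint (monic_X.mul (hp.monic k)) (hX k),
      hp.polyInner_eq_zero k (k + 2) (by omega), sub_zero]
  have hexp := hp.eq_sum_polyInner hint hu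
  rw [Finset.sum_range_succ, Finset.sum_range_succ,
    Finset.sum_eq_zero fun j hj => by rw [hlow j (Finset.mem_range.1 hj), zero_div, C_0, zero_mul],
    hk, zero_add] at hexp
  refine ⟨polyInner μ u (p (k + 1)) / polyInner μ (p (k + 1)) (p (k + 1)), _,
    div_pos (hp.polyInner_self_pos (k + 1)) (hp.polyInner_self_pos k), ?_⟩
  linear_combination hu_def - hexp

theorem wronskian_pos (hint : ∀ q : ℝ[X], Integrable (fun x => q.eval x) μ)
    (hp : IsMonicOrthogonal μ p) (k : ℕ) (x : ℝ) : 0 < (wronskian (p k) (p (k + 1))).eval x := by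
  induction k with
  | zero =>
    rw [(hp.monic 0).natDegree_eq_zero.1 (hp.natDegree_eq 0),
      (hp.monic 1).eq_X_add_C (hp.natDegree_eq 1)]
    simp [wronskian]
  | succ k ih =>
    obtain ⟨a, b, hb, hrec⟩ := hp.exists_recurrence hint k
    have hW : wronskian (p (k + 1)) (p (k + 2))
        = p (k + 1) ^ 2 + C b * wronskian (p k) (p (k + 1)) := by
      rw [hrec]
      simp only [wronskian, derivative_sub, derivative_mul, derivative_X, derivative_C]
      ring
    rw [hW, eval_add, eval_mul, eval_C, eval_pow]
    exact add_pos_of_nonneg_of_pos (sq_nonneg _) (mul_pos hb ih)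

theorem eval_pos_of_wronskian_pos (hint : ∀ q : ℝ[X], Integrable (fun x => q.eval x) μ)
    (hp : IsMonicOrthogonal μ p) {m : ℕ} {f : ℝ[X]} {r : ℝ}
    (hW : ∀ x, 0 < (wronskian (p m) f).eval x) (hf : ∀ x, r ≤ x → 0 ≤ f.eval x)
    {j : ℕ} (hj : j ≤ m) {x : ℝ} (hx : r ≤ x) : 0 < (p j).eval x := by
  induction m generalizing f with
  | zero =>
    obtain rfl := Nat.le_zero.1 hj
    exact (hp.monic 0).eval_pos_of_wronskian_pos hW hf hx
  | succ m ih =>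
    have hm : ∀ x, r ≤ x → 0 < (p (m + 1)).eval x := fun x hx =>
      (hp.monic _).eval_pos_of_wronskian_pos hW hf hx
    rcases hj.eq_or_lt with rfl | hj
    · exact hm x hx
    · exact ih (hp.wronskian_pos hint m) (fun x hx => (hm x hx).le) (Nat.lt_succ_iff.1 hj)

theorem degree_C_mul_lt (hp : IsMonicOrthogonal μ p) (α : ℝ) (m : ℕ) :
    (C α * p m).degree < (p (m + 1)).degree := by
  refine degree_lt_degree ((natDegree_C_mul_le α (p m)).trans_lt ?_)
  rw [hp.natDegree_eq, hp.natDegree_eq]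
  exact m.lt_succ_self

theorem monic_add_C_mul (hp : IsMonicOrthogonal μ p) (α : ℝ) (m : ℕ) :
    (p (m + 1) + C α * p m).Monic :=
  (hp.monic _).add_of_left (hp.degree_C_mul_lt α m)

theorem natDegree_add_C_mul (hp : IsMonicOrthogonal μ p) (α : ℝ) (m : ℕ) :
    (p (m + 1) + C α * p m).natDegree = m + 1 := by
  rw [natDegree_add_eq_left_of_degree_lt (hp.degree_C_mul_lt α m), hp.natDegree_eq]

theorem polyInner_add_C_mul_eq_zero (hint : ∀ q : ℝ[X], Integrable (fun x => q.eval x) μ)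
    (hp : IsMonicOrthogonal μ p) (α : ℝ) {m : ℕ} {h : ℝ[X]} (hh : h.degree < m) :
    polyInner μ h (p (m + 1) + C α * p m) = 0 := by
  rw [polyInner_add_right hint, polyInner_C_mul_right, polyInner_comm,
    hp.polyInner_eq_zero_of_degree_lt hint (hh.trans (by exact_mod_cast m.lt_succ_self)),
    polyInner_comm, hp.polyInner_eq_zero_of_degree_lt hint hh, mul_zero, add_zero]

theorem eval_pos_of_isMaxRoot (hint : ∀ q : ℝ[X], Integrable (fun x => q.eval x) μ)
    (hp : IsMonicOrthogonal μ p) {α r : ℝ} {m : ℕ} (hr : (p (m + 1) + C α * p m).IsRoot r)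
    (hmax : ∀ x, (p (m + 1) + C α * p m).IsRoot x → x ≤ r) {j : ℕ} (hj : j ≤ m) :
    0 < (p j).eval r := by
  refine hp.eval_pos_of_wronskian_pos hint (f := p (m + 1) + C α * p m) (fun x => ?_)
    (fun x hx => ?_) hj le_rfl
  · have hW : wronskian (p m) (p (m + 1) + C α * p m) = wronskian (p m) (p (m + 1)) := by
      simp only [wronskian, derivative_add, derivative_mul, derivative_C, zero_mul, zero_add]
      ring
    exact hW ▸ hp.wronskian_pos hint m x
  · rcases hx.eq_or_lt with rfl | hx
    · exact hr.ge
    · exact ((hp.monic_add_C_mul α m).eval_pos_of_forall_isRoot_lt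
        fun y hy => (hmax y hy).trans_lt hx).le

end IsMonicOrthogonal

/-- Christoffel-type expansion: if `r` is the largest root of `p_n + α p_{n-1}` (monic
orthogonal polynomials for `μ`), then `(p_n + α p_{n-1})/(t - r)` is a strictly positive
combination of `p₀, …, p_{n-1}`. -/
theorem stmt_7 (μ : Measure ℝ)
    (hint : ∀ q : Polynomial ℝ, Integrable (fun x => q.eval x) μ)
    (hpos : ∀ q : Polynomial ℝ, q ≠ 0 → 0 < ∫ x, (q.eval x) ^ 2 ∂μ)
    (p : ℕ → Polynomial ℝ) (hmonic : ∀ i, (p i).Monic) (hdeg : ∀ i, (p i).natDegree = i)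
    (horth : ∀ i j, i ≠ j → ∫ x, (p i).eval x * (p j).eval x ∂μ = 0)
    (n : ℕ) (hn : 1 ≤ n) (α : ℝ) (r : ℝ)
    (hroot : (p n + C α * p (n - 1)).eval r = 0)
    (hmax : ∀ x : ℝ, (p n + C α * p (n - 1)).eval x = 0 → x ≤ r) :
    ∃ c : ℕ → ℝ, (∀ j < n, 0 < c j) ∧
      p n + C α * p (n - 1) = (X - C r) * ∑ j ∈ Finset.range n, C (c j) * p j := by
  have hp : IsMonicOrthogonal μ p :=
    ⟨hmonic, hdeg, horth, fun i => by simpa only [polyInner, sq] using hpos _ (hmonic i).ne_zero⟩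
  obtain ⟨m, rfl⟩ : ∃ m, n = m + 1 := ⟨n - 1, by omega⟩
  rw [Nat.add_sub_cancel] at hroot hmax ⊢
  set s := (p (m + 1) + C α * p m) /ₘ (X - C r)
  have hs : s.Monic := (monic_X_sub_C r).of_mul_monic_left
    (by rw [mul_divByMonic_eq_iff_isRoot.2 hroot]; exact hp.monic_add_C_mul α m)
  have hsdeg : s.natDegree = m := by
    rw [natDegree_divByMonic _ (monic_X_sub_C r), hp.natDegree_add_C_mul, natDegree_X_sub_C,
      Nat.add_sub_cancel]
  have hquad : ∀ j ≤ m, polyInner μ (p j) s = (p j).eval r * ∫ x, s.eval x ∂μ := fun j hj =>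
    polyInner_divByMonic_X_sub_C hint hroot (fun _ hh => hp.polyInner_add_C_mul_eq_zero hint α hh)
      (by rw [degree_eq_natDegree (hp.monic j).ne_zero, hp.natDegree_eq]; exact_mod_cast hj)
  have hpr : ∀ j ≤ m, 0 < (p j).eval r := fun j hj => hp.eval_pos_of_isMaxRoot hint hroot hmax hj
  have hI : 0 < ∫ x, s.eval x ∂μ := by
    have hm := hquad m le_rfl
    rw [hp.polyInner_eq_of_monic hint hs hsdeg] at hm
    exact pos_of_mul_pos_right (hm ▸ hp.polyInner_self_pos m) (hpr m le_rfl).le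
  refine ⟨fun j => polyInner μ s (p j) / polyInner μ (p j) (p j), fun j hj => ?_, ?_⟩
  · dsimp only
    rw [polyInner_comm, hquad j (by omega)]
    exact div_pos (mul_pos (hpr j (by omega)) hI) (hp.polyInner_self_pos j)
  · have hs_lt : s.degree < ↑(m + 1) := by
      rw [degree_eq_natDegree hs.ne_zero, hsdeg]
      exact_mod_cast m.lt_succ_self
    rw [← mul_divByMonic_eq_iff_isRoot.2 hroot, ← hp.eq_sum_polyInner hint hs_lt]
end

section
/- (Gauss–Jacobi-type quadrature) Let μ be a positive measure with monic orthogonal polynomials p₀,p₁,…, let α ∈ ℝ, and let r₁ < ⋯ < r_n be the roots of p_n + α p_{n−1}. Then there exist positive numbers λ₁,…,λ_n such that for every polynomial f of degree at most 2n−2, ∫ f dμ = ∑_{i=1}^n λ_i f(r_i). -/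
/-!
Write `w = p_n + α p_{n-1} = ∏ (X - rᵢ)`. Orthogonality gives `∫ w g dμ = 0` whenever
`deg g < n - 1`. Dividing `f` by `w` with remainder, `f = w g + ρ` with `deg g < n - 1` and
`deg ρ < n`, so `∫ f dμ = ∫ ρ dμ`; and `ρ` agrees with `f` at the nodes, hence is its Lagrange
interpolant there, so the weights are `λᵢ = ∫ ℓᵢ dμ`. Applied to `ℓᵢ²`, of degree `2n - 2`, this
gives `λᵢ = ∫ ℓᵢ² dμ > 0`.
-/

open MeasureTheory Polynomial Finset

noncomputable def MeasureTheory.polynomialIntegralₗ (μ : Measure ℝ)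
    (hint : ∀ q : ℝ[X], Integrable (fun x => q.eval x) μ) : ℝ[X] →ₗ[ℝ] ℝ where
  toFun q := ∫ x, q.eval x ∂μ
  map_add' f g := by
    simp only [eval_add]
    exact integral_add (hint f) (hint g)
  map_smul' c f := by
    simp only [eval_smul, smul_eq_mul, RingHom.id_apply]
    exact integral_const_mul c _

theorem Polynomial.map_mul_eq_zero_of_degree_lt {R : Type*} [CommRing R] (I : R[X] →ₗ[R] R)
    {p : ℕ → R[X]} (hmonic : ∀ i, (p i).Monic) (hdeg : ∀ i, (p i).natDegree = i)
    (horth : ∀ i j, i ≠ j → I (p i * p j) = 0) {k : ℕ} {s : R[X]} (hs : s.degree < k) :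
    I (p k * s) = 0 := by
  nontriviality R
  let S : Sequence R := ⟨p, fun i => by rw [degree_eq_natDegree (hmonic i).ne_zero, hdeg]⟩
  have hspan : s ∈ Submodule.span R (p '' Set.Iio k) := by
    rw [S.span_degreeLT fun i _ => by simp [S, (hmonic i).leadingCoeff]]
    exact mem_degreeLT.2 hs
  have hker :
      Submodule.span R (p '' Set.Iio k) ≤ LinearMap.ker (I ∘ₗ LinearMap.mulLeft R (p k)) := by
    rw [Submodule.span_le]
    rintro _ ⟨i, hi, rfl⟩
    exact horth k i (Set.mem_Iio.1 hi).ne'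
  exact hker hspan

namespace Lagrange

variable {F ι : Type*} [Field F] [DecidableEq ι] {s : Finset ι} {v : ι → F}

theorem map_eq_sum_basis_of_degree_lt (I : F[X] →ₗ[F] F) (hvs : Set.InjOn v s) {m : ℕ}
    (hnodal : ∀ g : F[X], g.degree < m → I (nodal s v * g) = 0) {q : F[X]}
    (hq : q.degree < #s + m) : I q = ∑ i ∈ s, I (Lagrange.basis s v i) * q.eval (v i) := by
  set w := nodal s v
  have hw : w.degree = #s := degree_nodal
  have hdecomp : q %ₘ w + w * (q /ₘ w) = q := modByMonic_add_div q w
  have hquot : (q /ₘ w).degree < m := by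
    have : (w * (q /ₘ w)).degree < #s + m := by
      rw [eq_sub_of_add_eq' hdecomp]
      refine (degree_sub_le _ _).trans_lt (max_lt hq ?_)
      refine (degree_modByMonic_lt q nodal_monic).trans_le ?_
      rw [hw]
      exact_mod_cast Nat.le_add_right _ _
    rw [degree_mul, hw] at this
    exact (WithBot.add_lt_add_iff_left WithBot.coe_ne_bot).1 this
  have hrem : q %ₘ w = interpolate s v (fun i => q.eval (v i)) := by
    refine eq_interpolate_of_eval_eq _ hvs (hw ▸ degree_modByMonic_lt q nodal_monic)
      fun i hi => ?_
    conv_rhs => rw [← hdecomp]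
    simp [w, eval_nodal_at_node hi]
  conv_lhs => rw [← hdecomp]
  rw [map_add, hnodal _ hquot, add_zero, hrem, interpolate_apply, map_sum]
  refine sum_congr rfl fun i _ => ?_
  rw [C_mul', map_smul, smul_eq_mul, mul_comm]

theorem map_basis_pos [LT F] (I : F[X] →ₗ[F] F) (hvs : Set.InjOn v s)
    (hnodal : ∀ g : F[X], g.degree < ↑(#s - 1) → I (nodal s v * g) = 0)
    (hpos : ∀ f : F[X], f ≠ 0 → 0 < I (f * f)) {i : ι} (hi : i ∈ s) :
    0 < I (Lagrange.basis s v i) := by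
  have hcard : 0 < #s := card_pos.2 ⟨i, hi⟩
  have hsq : (Lagrange.basis s v i * Lagrange.basis s v i).degree < #s + ↑(#s - 1) := by
    rw [degree_mul, degree_basis hvs hi]
    exact_mod_cast (by omega : #s - 1 + (#s - 1) < #s + (#s - 1))
  calc 0 < I (Lagrange.basis s v i * Lagrange.basis s v i) := hpos _ (basis_ne_zero hvs hi)
    _ = ∑ j ∈ s, I (Lagrange.basis s v j) *
          (Lagrange.basis s v i * Lagrange.basis s v i).eval (v j) :=
      map_eq_sum_basis_of_degree_lt I hvs hnodal hsq
    _ = I (Lagrange.basis s v i) := by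
      rw [sum_eq_single_of_mem i hi fun j hj hji => by simp [eval_basis_of_ne hji.symm hj]]
      simp [eval_basis_self hvs hi]

end Lagrange

/-- Gauss–Jacobi-type quadrature: if `r₁ < ⋯ < r_n` are the roots of `p_n + α p_{n-1}`
(monic orthogonal polynomials for `μ`), then there are positive weights `λᵢ` such that
`∫ f dμ = ∑ λᵢ f(rᵢ)` for all polynomials `f` of degree at most `2n - 2`. -/
theorem stmt_9 (μ : Measure ℝ)
    (hint : ∀ q : Polynomial ℝ, Integrable (fun x => q.eval x) μ)
    (hpos : ∀ q : Polynomial ℝ, q ≠ 0 → 0 < ∫ x, (q.eval x) ^ 2 ∂μ)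
    (p : ℕ → Polynomial ℝ) (hmonic : ∀ i, (p i).Monic) (hdeg : ∀ i, (p i).natDegree = i)
    (horth : ∀ i j, i ≠ j → ∫ x, (p i).eval x * (p j).eval x ∂μ = 0)
    (n : ℕ) (hn : 1 ≤ n) (α : ℝ) (r : ℕ → ℝ)
    (hsort : ∀ i j, i < j → j < n → r i < r j)
    (hroots : p n + C α * p (n - 1) = ∏ i ∈ Finset.range n, (X - C (r i))) :
    ∃ lam : ℕ → ℝ, (∀ i < n, 0 < lam i) ∧
      ∀ q : Polynomial ℝ, q.natDegree ≤ 2 * n - 2 →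
        ∫ x, q.eval x ∂μ = ∑ i ∈ Finset.range n, lam i * q.eval (r i) := by
  let I := polynomialIntegralₗ μ hint
  have hinj : Set.InjOn r (range n) := by
    rw [coe_range]
    exact StrictMonoOn.injOn fun i _ j hj hij => hsort i j hij hj
  have horthI : ∀ i j, i ≠ j → I (p i * p j) = 0 := fun i j hij => by
    simpa [I, polynomialIntegralₗ] using horth i j hij
  have hnodal : ∀ g : ℝ[X], g.degree < ↑(#(range n) - 1) →
      I (Lagrange.nodal (range n) r * g) = 0 := by
    intro g hg
    rw [card_range] at hg
    have hg' : g.degree < n := hg.trans_le (by exact_mod_cast n.sub_le 1)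
    rw [Lagrange.nodal, ← hroots, add_mul, mul_assoc, C_mul', map_add, map_smul,
      map_mul_eq_zero_of_degree_lt I hmonic hdeg horthI hg',
      map_mul_eq_zero_of_degree_lt I hmonic hdeg horthI hg, smul_zero, add_zero]
  refine ⟨fun i => I (Lagrange.basis (range n) r i),
    fun i hi => Lagrange.map_basis_pos I hinj hnodal (fun f hf => ?_) (mem_range.2 hi),
    fun q hq => Lagrange.map_eq_sum_basis_of_degree_lt I hinj hnodal ?_⟩
  · simpa [I, polynomialIntegralₗ, sq] using hpos f hf
  · rw [card_range]
    exact degree_le_natDegree.trans_lt (by exact_mod_cast (by omega : q.natDegree < n + (n - 1)))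
end

section
/- Let μ be a positive measure, α ∈ ℝ, and r₁ < ⋯ < r_n the roots of p_n + α p_{n−1} (monic orthogonal polynomials p_i for μ). For 0 ≤ j ≤ n−1, the signed measure dμ_j(t) = ∏_{i=0}^{j−1}(r_{n−i} − t) dμ(t) is positive definite up to degree n−j−1. -/
/-!
The polynomial `p_n + α p_{n-1} = ∏ (X - r_i)` is orthogonal to every polynomial of degree
`< n - 1`, so the interpolatory quadrature rule on its roots is exact up to degree `2n - 2`
(Gauss–Radau type). Applied to the squares of the Lagrange basis polynomials this shows that
its weights are positive. For `deg f ≤ n - j - 1` the polynomial `f² ∏_{i<j} (r_{n-i} - t)` has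
degree `≤ 2n - 2`; its values at the nodes are nonnegative, since the product vanishes at the
`j` largest nodes and is positive at the others, and `f` cannot vanish at all of the remaining
`n - j` nodes. Hence the quadrature sum, i.e. the integral, is positive.
-/

open MeasureTheory Polynomial

open Finset Lagrange

section IntegralEval

variable {μ : Measure ℝ}

noncomputable def integralEval (hint : ∀ q : ℝ[X], Integrable (fun x => q.eval x) μ) :
    ℝ[X] →ₗ[ℝ] ℝ where
  toFun q := ∫ x, q.eval x ∂μ
  map_add' a b := by simp only [eval_add]; exact integral_add (hint a) (hint b)
  map_smul' c a := by simp only [eval_smul, smul_eq_mul, integral_const_mul, RingHom.id_apply]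

@[simp]
theorem integralEval_apply (hint : ∀ q : ℝ[X], Integrable (fun x => q.eval x) μ) (q : ℝ[X]) :
    integralEval hint q = ∫ x, q.eval x ∂μ :=
  rfl

end IntegralEval

section Orthogonal

variable {μ : Measure ℝ} {p : ℕ → ℝ[X]}

theorem integral_eval_mul_orthogonal_eq_zero
    (hint : ∀ q : ℝ[X], Integrable (fun x => q.eval x) μ)
    (hmonic : ∀ i, (p i).Monic) (hdeg : ∀ i, (p i).natDegree = i)
    (horth : ∀ i j, i ≠ j → ∫ x, (p i).eval x * (p j).eval x ∂μ = 0)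
    {q : ℝ[X]} {m : ℕ} (hq : q.degree < m) :
    ∫ x, q.eval x * (p m).eval x ∂μ = 0 := by
  suffices h : ∀ d : ℕ, ∀ q : ℝ[X], q.degree < d → ∀ m, d ≤ m →
      integralEval hint (q * p m) = 0 by
    simpa using h m q hq m le_rfl
  intro d
  induction d with
  | zero =>
    intro q hq m _
    have hq0 : q = 0 := by simpa using hq
    simp [hq0]
  | succ d ih =>
    intro q hq m hm
    set c := q.coeff d
    have hlow : (q - C c * p d).degree < d := by
      rw [degree_lt_iff_coeff_zero]
      intro k hk
      rcases hk.eq_or_lt with rfl | hk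
      · have hlead : (p d).coeff d = 1 := by simpa [hdeg d] using (hmonic d).coeff_natDegree
        simp [c, hlead]
      · have hqk : q.coeff k = 0 := coeff_eq_zero_of_degree_lt (hq.trans_le (by exact_mod_cast hk))
        have hpk : (p d).coeff k = 0 := coeff_eq_zero_of_natDegree_lt (by rwa [hdeg])
        simp [hqk, hpk]
    have hsplit : q * p m = (q - C c * p d) * p m + c • (p d * p m) := by
      rw [smul_eq_C_mul]; ring
    rw [hsplit, map_add, map_smul, ih _ hlow m (by omega), integralEval_apply]
    simp [horth d m (by omega)]

theorem integral_eval_quasiOrthogonal_mul_eq_zero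
    (hint : ∀ q : ℝ[X], Integrable (fun x => q.eval x) μ)
    (hmonic : ∀ i, (p i).Monic) (hdeg : ∀ i, (p i).natDegree = i)
    (horth : ∀ i j, i ≠ j → ∫ x, (p i).eval x * (p j).eval x ∂μ = 0)
    {n : ℕ} (α : ℝ) {Q : ℝ[X]} (hQ : Q.degree < ↑(n - 1)) :
    ∫ x, ((p n + C α * p (n - 1)) * Q).eval x ∂μ = 0 := by
  have hQn : Q.degree < n := hQ.trans_le (by exact_mod_cast n.sub_le 1)
  have hsplit : (p n + C α * p (n - 1)) * Q = Q * p n + α • (Q * p (n - 1)) := by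
    rw [smul_eq_C_mul]; ring
  rw [← integralEval_apply hint, hsplit, map_add, map_smul]
  simp [integral_eval_mul_orthogonal_eq_zero hint hmonic hdeg horth hQ,
    integral_eval_mul_orthogonal_eq_zero hint hmonic hdeg horth hQn]

end Orthogonal

section Quadrature

variable {ι : Type*} [DecidableEq ι] {μ : Measure ℝ} {s : Finset ι} {v : ι → ℝ}

noncomputable def quadWeight (μ : Measure ℝ) (s : Finset ι) (v : ι → ℝ) (i : ι) : ℝ :=
  ∫ x, (Lagrange.basis s v i).eval x ∂μ

theorem integral_eval_eq_sum_quadWeight_of_degree_lt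
    (hint : ∀ q : ℝ[X], Integrable (fun x => q.eval x) μ) (hvs : Set.InjOn v s)
    {f : ℝ[X]} (hf : f.degree < #s) :
    ∫ x, f.eval x ∂μ = ∑ i ∈ s, quadWeight μ s v i * f.eval (v i) := by
  conv_lhs => rw [eq_interpolate hvs hf]
  rw [← integralEval_apply hint, interpolate_apply, map_sum]
  refine sum_congr rfl fun i _ => ?_
  rw [← smul_eq_C_mul, map_smul, smul_eq_mul, mul_comm, integralEval_apply, quadWeight]

theorem integral_eval_eq_sum_quadWeight
    (hint : ∀ q : ℝ[X], Integrable (fun x => q.eval x) μ) (hvs : Set.InjOn v s) {m : ℕ}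
    (hnodal : ∀ Q : ℝ[X], Q.degree < m → ∫ x, (nodal s v * Q).eval x ∂μ = 0)
    {f : ℝ[X]} (hf : f.natDegree < #s + m) :
    ∫ x, f.eval x ∂μ = ∑ i ∈ s, quadWeight μ s v i * f.eval (v i) := by
  have hdecomp := modByMonic_add_div f (nodal s v)
  have hquot : (f /ₘ nodal s v).degree < m := by
    by_cases h0 : f /ₘ nodal s v = 0
    · simp [h0]
    have hcard : #s ≤ f.natDegree := by
      by_contra! hlt
      refine h0 ((divByMonic_eq_zero_iff nodal_monic).mpr ?_)
      rw [degree_nodal]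
      exact degree_le_natDegree.trans_lt (by exact_mod_cast hlt)
    rw [degree_eq_natDegree h0, natDegree_divByMonic f nodal_monic, natDegree_nodal]
    exact_mod_cast (by omega)
  have hrem : (f %ₘ nodal s v).degree < #s := by
    simpa [degree_nodal] using degree_modByMonic_lt f (nodal_monic (s := s) (v := v))
  calc ∫ x, f.eval x ∂μ
      = ∫ x, (f %ₘ nodal s v).eval x ∂μ + ∫ x, (nodal s v * (f /ₘ nodal s v)).eval x ∂μ := by
        simp_rw [← integralEval_apply hint, ← map_add, hdecomp]
    _ = ∑ i ∈ s, quadWeight μ s v i * (f %ₘ nodal s v).eval (v i) := by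
        rw [hnodal _ hquot, add_zero, integral_eval_eq_sum_quadWeight_of_degree_lt hint hvs hrem]
    _ = ∑ i ∈ s, quadWeight μ s v i * f.eval (v i) := by
        refine sum_congr rfl fun i hi => ?_
        conv_rhs => rw [← hdecomp]
        simp [eval_nodal_at_node hi]

theorem quadWeight_pos (hpos : ∀ q : ℝ[X], q ≠ 0 → 0 < ∫ x, (q.eval x) ^ 2 ∂μ)
    (hvs : Set.InjOn v s)
    (hquad : ∀ f : ℝ[X], f.natDegree ≤ 2 * (#s - 1) →
      ∫ x, f.eval x ∂μ = ∑ i ∈ s, quadWeight μ s v i * f.eval (v i))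
    {i : ι} (hi : i ∈ s) : 0 < quadWeight μ s v i := by
  have hdeg : (Lagrange.basis s v i ^ 2).natDegree ≤ 2 * (#s - 1) := by
    rw [natDegree_pow, natDegree_basis hvs hi, mul_comm]
  calc 0 < ∫ x, ((Lagrange.basis s v i).eval x) ^ 2 ∂μ := hpos _ (basis_ne_zero hvs hi)
    _ = ∑ j ∈ s, quadWeight μ s v j * (Lagrange.basis s v i ^ 2).eval (v j) := by
        simp_rw [← eval_pow]; exact hquad _ hdeg
    _ = quadWeight μ s v i := by
        rw [sum_eq_single_of_mem i hi fun j hj hji => by simp [eval_basis_of_ne hji.symm hj]]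
        simp [eval_basis_self hvs hi]

end Quadrature

theorem exists_mem_eval_ne_zero {ι R : Type*} [CommRing R] [IsDomain R] [DecidableEq R]
    {q : R[X]} (hq : q ≠ 0) {s : Finset ι} {v : ι → R} (hvs : Set.InjOn v s)
    (hdeg : q.natDegree < #s) : ∃ i ∈ s, q.eval (v i) ≠ 0 := by
  by_contra! h
  refine hq (eq_zero_of_natDegree_lt_card_of_eval_eq_zero' q (s.image v) ?_ ?_)
  · simpa using h
  · rwa [card_image_of_injOn hvs]

theorem natDegree_prod_C_sub_X_le {ι R : Type*} [CommRing R] (s : Finset ι) (a : ι → R) :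
    (∏ i ∈ s, (C (a i) - X)).natDegree ≤ #s := by
  refine (natDegree_prod_le _ _).trans ?_
  simpa using sum_le_card_nsmul s _ 1 fun i _ =>
    (natDegree_sub_le _ _).trans (by simp [natDegree_X_le])

section Nodes

variable {r : ℕ → ℝ} {n : ℕ}

theorem prod_range_sub_pos (hr : StrictMonoOn r (Set.Iio n)) {j k : ℕ} (hk : k < n - j) :
    0 < ∏ i ∈ range j, (r (n - 1 - i) - r k) :=
  prod_pos fun i hi => sub_pos.mpr <| hr (by simp only [Set.mem_Iio]; omega)
    (by simp only [Set.mem_Iio]; omega) (by simp only [mem_range] at hi; omega)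

theorem prod_range_sub_nonneg (hr : StrictMonoOn r (Set.Iio n)) {j k : ℕ} (hk : k < n) :
    0 ≤ ∏ i ∈ range j, (r (n - 1 - i) - r k) := by
  rcases lt_or_ge k (n - j) with hkj | hkj
  · exact (prod_range_sub_pos hr hkj).le
  · -- the factor `i = n - 1 - k` vanishes
    refine (prod_eq_zero (i := n - 1 - k) (by simp only [mem_range]; omega) ?_).ge
    rw [show n - 1 - (n - 1 - k) = k by omega, sub_self]

end Nodes

/-- With `r₁ < ⋯ < r_n` the roots of `p_n + α p_{n-1}` (monic orthogonal polynomials for `μ`),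
for `0 ≤ j ≤ n-1` the signed measure `dμ_j(t) = ∏_{i=0}^{j-1} (r_{n-i} - t) dμ(t)` is positive
definite up to degree `n - j - 1`: `∫ f² dμ_j > 0` for nonzero `f` with `deg f ≤ n - j - 1`. -/
theorem stmt_10 (μ : Measure ℝ)
    (hint : ∀ q : Polynomial ℝ, Integrable (fun x => q.eval x) μ)
    (hpos : ∀ q : Polynomial ℝ, q ≠ 0 → 0 < ∫ x, (q.eval x) ^ 2 ∂μ)
    (p : ℕ → Polynomial ℝ) (hmonic : ∀ i, (p i).Monic) (hdeg : ∀ i, (p i).natDegree = i)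
    (horth : ∀ i j, i ≠ j → ∫ x, (p i).eval x * (p j).eval x ∂μ = 0)
    (n : ℕ) (hn : 1 ≤ n) (α : ℝ) (r : ℕ → ℝ)
    (hsort : ∀ i j, i < j → j < n → r i < r j)
    (hroots : p n + C α * p (n - 1) = ∏ i ∈ Finset.range n, (X - C (r i))) :
    ∀ j ≤ n - 1, ∀ q : Polynomial ℝ, q ≠ 0 → q.natDegree ≤ n - j - 1 →
      0 < ∫ x, (q ^ 2 * ∏ i ∈ Finset.range j, (C (r (n - 1 - i)) - X)).eval x ∂μ := by
  intro j hj q hq hqdeg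
  have hr : StrictMonoOn r (Set.Iio n) := fun a _ b hb hab => hsort a b hab hb
  have hinj : Set.InjOn r (range n) := by simpa using hr.injOn
  have hquad : ∀ f : ℝ[X], f.natDegree ≤ 2 * (#(range n) - 1) →
      ∫ x, f.eval x ∂μ = ∑ k ∈ range n, quadWeight μ (range n) r k * f.eval (r k) := by
    refine fun f hf => integral_eval_eq_sum_quadWeight hint hinj (m := n - 1) (fun Q hQ => ?_)
      (by rw [card_range] at *; omega)
    rw [nodal_eq, ← hroots]
    exact integral_eval_quasiOrthogonal_mul_eq_zero hint hmonic hdeg horth α hQ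
  set g := q ^ 2 * ∏ i ∈ range j, (C (r (n - 1 - i)) - X)
  have hgdeg : g.natDegree ≤ 2 * (#(range n) - 1) := by
    have := natDegree_prod_C_sub_X_le (range j) fun i => r (n - 1 - i)
    rw [card_range] at *
    refine natDegree_mul_le.trans ?_
    rw [natDegree_pow]
    omega
  have hval : ∀ k, g.eval (r k) = q.eval (r k) ^ 2 * ∏ i ∈ range j, (r (n - 1 - i) - r k) := by
    simp [g, eval_prod]
  obtain ⟨k, hk, hqk⟩ := exists_mem_eval_ne_zero hq (s := range (n - j))
    (hinj.mono (by simp)) (by simp only [card_range]; omega)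
  have hk' : k ∈ range n := by simp only [mem_range] at hk ⊢; omega
  rw [hquad g hgdeg]
  refine sum_pos' (fun i hi => mul_nonneg (quadWeight_pos hpos hinj hquad hi).le ?_)
    ⟨k, hk', mul_pos (quadWeight_pos hpos hinj hquad hk') ?_⟩
  · rw [hval]
    exact mul_nonneg (sq_nonneg _) (prod_range_sub_nonneg hr (mem_range.mp hi))
  · rw [hval]
    exact mul_pos (sq_pos_of_ne_zero hqk) (prod_range_sub_pos hr (mem_range.mp hk))
end

section
/- (Linear programming bound for potential energy on the sphere) Let f : (0,4] → ℝ, and suppose h : [−1,1] → ℝ is a polynomial with h(t) ≤ f(2−2t) for all t ∈ [−1,1) that can be written h(t) = ∑_{i=0}^d α_i C_i^{n/2−1}(t) with all α_i ≥ 0, where C_i^{n/2−1} are the ultraspherical (Gegenbauer) polynomials. Then for every finite set C ⊂ S^{n−1} of N points, ∑_{x,y∈C, x≠y} f(|x−y|²) ≥ N² α₀ − N h(1). -/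
/-!
Write `λ = n/2 - 1`. For a unit vector `x`, `Z_x(y) = |y|^i C_i^λ(⟨x, y⟩ / |y|)` is a harmonic
polynomial. In the Fischer inner product `⟨p, q⟩ = ∑ α! p_α q_α`, multiplication by `X_j` is
adjoint to `∂_j`, so multiplication by `|y|²` is adjoint to the Laplacian; expanding `Z_y` therefore
leaves only its top term `c ⟨y, ·⟩^i`, and `⟨Z_x, ⟨y, ·⟩^i⟩ = i! Z_x(y)`. This gives
`⟨Z_x, Z_y⟩ = 2^i (λ)_i C_i^λ(⟨x, y⟩)`, so `C_i^λ` is a positive semidefinite kernel on the sphere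
(when `λ = 0` and `i > 0` the recurrence gives `C_i^0 = 0`). As `C_0 = 1`, the sum of `h(⟨x, y⟩)`
over all pairs is at least `α₀ N²`; the diagonal contributes `N h(1)` and each off-diagonal term is
at most `f(|x - y|²) = f(2 - 2⟨x, y⟩)`.
-/

open Polynomial Classical
noncomputable section

/-- The Gegenbauer (ultraspherical) polynomials `C_i^λ`, with `C₀ = 1`, `C₁ = 2λt`, and
`i C_i(t) = 2(i+λ-1) t C_{i-1}(t) - (i+2λ-2) C_{i-2}(t)`. -/
noncomputable def gegenbauer (lam : ℝ) : ℕ → Polynomial ℝ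
  | 0 => 1
  | 1 => C (2 * lam) * X
  | (i + 2) =>
      C (2 * ((i : ℝ) + 2 + lam - 1) / ((i : ℝ) + 2)) * X * gegenbauer lam (i + 1)
        - C (((i : ℝ) + 2 + 2 * lam - 2) / ((i : ℝ) + 2)) * gegenbauer lam i

def gegenbauerCoeff (lam : ℝ) (i k : ℕ) : ℝ :=
  if 2 * k ≤ i then
    (-1) ^ k * 2 ^ (i - 2 * k) * (ascPochhammer ℝ (i - k)).eval lam
      / (k.factorial * (i - 2 * k).factorial)
  else 0

theorem gegenbauerCoeff_of_lt {lam : ℝ} {i k : ℕ} (h : i < 2 * k) :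
    gegenbauerCoeff lam i k = 0 :=
  if_neg (by omega)

theorem gegenbauerCoeff_two_mul_add (lam : ℝ) (k a : ℕ) :
    gegenbauerCoeff lam (2 * k + a) k
      = (-1) ^ k * 2 ^ a * (ascPochhammer ℝ (k + a)).eval lam / (k.factorial * a.factorial) := by
  rw [gegenbauerCoeff, if_pos (by omega), show 2 * k + a - 2 * k = a by omega,
    show 2 * k + a - k = k + a by omega]

theorem gegenbauerCoeff_zero_right (lam : ℝ) (i : ℕ) :
    gegenbauerCoeff lam i 0 = 2 ^ i * (ascPochhammer ℝ i).eval lam / i.factorial := by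
  simpa using gegenbauerCoeff_two_mul_add lam 0 i

theorem gegenbauerCoeff_recurrence_zero (lam : ℝ) (i : ℕ) :
    ((i : ℝ) + 2) * gegenbauerCoeff lam (i + 2) 0
      = 2 * (i + 1 + lam) * gegenbauerCoeff lam (i + 1) 0 := by
  rw [gegenbauerCoeff_zero_right, gegenbauerCoeff_zero_right, ascPochhammer_succ_eval,
    Nat.factorial_succ (i + 1)]
  push_cast
  field_simp
  ring

theorem gegenbauerCoeff_recurrence_succ (lam : ℝ) (i k : ℕ) :
    ((i : ℝ) + 2) * gegenbauerCoeff lam (i + 2) (k + 1)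
      = 2 * (i + 1 + lam) * gegenbauerCoeff lam (i + 1) (k + 1)
        - (i + 2 * lam) * gegenbauerCoeff lam i k := by
  rcases lt_trichotomy i (2 * k) with hi | rfl | hi
  · simp only [gegenbauerCoeff_of_lt (by omega : i + 2 < 2 * (k + 1)),
      gegenbauerCoeff_of_lt (by omega : i + 1 < 2 * (k + 1)), gegenbauerCoeff_of_lt hi]
    ring
  · rw [gegenbauerCoeff_of_lt (by omega : 2 * k + 1 < 2 * (k + 1)),
      show 2 * k + 2 = 2 * (k + 1) + 0 by ring, gegenbauerCoeff_two_mul_add,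
      ← add_zero (2 * k), gegenbauerCoeff_two_mul_add, ascPochhammer_succ_eval,
      Nat.factorial_succ k]
    simp only [add_zero]
    push_cast
    field_simp
    ring
  · obtain ⟨a, rfl⟩ : ∃ a, i = 2 * k + 1 + a := ⟨i - (2 * k + 1), by omega⟩
    rw [show 2 * k + 1 + a + 2 = 2 * (k + 1) + (a + 1) by ring, gegenbauerCoeff_two_mul_add,
      show 2 * k + 1 + a + 1 = 2 * (k + 1) + a by ring, gegenbauerCoeff_two_mul_add,
      show 2 * k + 1 + a = 2 * k + (a + 1) by ring, gegenbauerCoeff_two_mul_add,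
      show k + 1 + (a + 1) = k + a + 1 + 1 by ring, ascPochhammer_succ_eval,
      show k + 1 + a = k + a + 1 by ring, show k + (a + 1) = k + a + 1 by ring,
      ascPochhammer_succ_eval, Nat.factorial_succ k, Nat.factorial_succ a]
    push_cast
    field_simp
    ring

theorem eval_gegenbauer_eq_sum (lam t : ℝ) {i N : ℕ} (hN : i < 2 * N) :
    (gegenbauer lam i).eval t
      = ∑ k ∈ Finset.range N, gegenbauerCoeff lam i k * t ^ (i - 2 * k) := by
  induction i using Nat.strong_induction_on generalizing N with
  | _ i ih =>
  match i, ih with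
  | 0, _ | 1, _ =>
    rw [Finset.sum_eq_single_of_mem 0 (Finset.mem_range.2 (by omega)) fun k _ hk =>
      by rw [gegenbauerCoeff_of_lt (by omega), zero_mul], gegenbauerCoeff_zero_right]
    simp [gegenbauer, ascPochhammer_one]
  | i + 2, ih =>
    obtain ⟨M, rfl⟩ : ∃ M, N = M + 1 := ⟨N - 1, by omega⟩
    have hk : ∀ k, ((i : ℝ) + 2) * (gegenbauerCoeff lam (i + 2) (k + 1) * t ^ (i + 2 - 2 * (k + 1)))
        = 2 * (i + 1 + lam) * t * (gegenbauerCoeff lam (i + 1) (k + 1) * t ^ (i + 1 - 2 * (k + 1)))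
          - (i + 2 * lam) * (gegenbauerCoeff lam i k * t ^ (i - 2 * k)) := by
      intro k
      have hpow : t * (gegenbauerCoeff lam (i + 1) (k + 1) * t ^ (i + 1 - 2 * (k + 1)))
          = gegenbauerCoeff lam (i + 1) (k + 1) * t ^ (i - 2 * k) := by
        rcases lt_or_ge (i + 1) (2 * (k + 1)) with hik | hik
        · simp [gegenbauerCoeff_of_lt hik]
        · rw [show i - 2 * k = i + 1 - 2 * (k + 1) + 1 by omega, pow_succ]
          ring
      rw [show i + 2 - 2 * (k + 1) = i - 2 * k by omega, mul_assoc _ t, hpow,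
        ← mul_assoc, gegenbauerCoeff_recurrence_succ]
      ring
    simp only [gegenbauer, eval_sub, eval_mul, eval_C, eval_X]
    rw [ih (i + 1) (by omega) (N := M + 1) (by omega), ih i (by omega) (N := M + 1) (by omega),
      Finset.sum_range_succ' (fun k => gegenbauerCoeff lam (i + 2) k * t ^ (i + 2 - 2 * k)),
      Finset.sum_range_succ' (fun k => gegenbauerCoeff lam (i + 1) k * t ^ (i + 1 - 2 * k)),
      Finset.sum_range_succ (fun k => gegenbauerCoeff lam i k * t ^ (i - 2 * k)),
      gegenbauerCoeff_of_lt (by omega : i < 2 * M), zero_mul, add_zero]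
    have hsum := Finset.sum_congr rfl fun k (_ : k ∈ Finset.range M) => hk k
    rw [Finset.sum_sub_distrib, ← Finset.mul_sum, ← Finset.mul_sum, ← Finset.mul_sum] at hsum
    have h0 := gegenbauerCoeff_recurrence_zero lam i
    simp only [Nat.mul_zero, Nat.sub_zero]
    field_simp
    linear_combination -(hsum + t ^ (i + 2) * h0)

-- The coefficient of `⟨x, ·⟩^(i-2k-2) |·|^(2k)` in the Laplacian of the zonal harmonic below.
theorem gegenbauerCoeff_harmonic (n i k : ℕ) :
    ((i - 2 * k : ℕ) : ℝ) * ((i - 2 * k - 1 : ℕ) : ℝ) * gegenbauerCoeff (n / 2 - 1) i k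
      + (2 * (k + 1) * (n + 2 * k) + 4 * ((i - 2 * (k + 1) : ℕ) : ℝ) * (k + 1))
        * gegenbauerCoeff (n / 2 - 1) i (k + 1) = 0 := by
  rcases lt_or_ge i (2 * k + 2) with hi | hi
  · rw [gegenbauerCoeff_of_lt (by omega : i < 2 * (k + 1)), mul_zero, add_zero]
    rcases lt_or_ge i (2 * k) with hk | hk
    · rw [gegenbauerCoeff_of_lt hk, mul_zero]
    · rw [show i - 2 * k - 1 = 0 by omega]
      simp
  · obtain ⟨a, rfl⟩ : ∃ a, i = 2 * k + 2 + a := ⟨i - (2 * k + 2), by omega⟩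
    rw [show 2 * k + 2 + a = 2 * k + (a + 2) by ring, gegenbauerCoeff_two_mul_add,
      show 2 * k + (a + 2) = 2 * (k + 1) + a by ring, gegenbauerCoeff_two_mul_add,
      show 2 * (k + 1) + a - 2 * k = a + 2 by omega, show a + 2 - 1 = a + 1 by omega,
      show 2 * (k + 1) + a - 2 * (k + 1) = a by omega, show k + (a + 2) = k + a + 1 + 1 by ring,
      show k + 1 + a = k + a + 1 by ring, ascPochhammer_succ_eval, Nat.factorial_succ k,
      Nat.factorial_succ (a + 1), Nat.factorial_succ a]
    push_cast
    field_simp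
    ring

theorem gegenbauer_zero_left {i : ℕ} (hi : 0 < i) : gegenbauer 0 i = 0 := by
  induction i using Nat.strong_induction_on with
  | _ i ih =>
  match i, hi, ih with
  | 1, _, _ => simp [gegenbauer]
  | i + 2, _, ih =>
    rw [gegenbauer, ih (i + 1) (by omega) (by omega)]
    rcases i.eq_zero_or_pos with rfl | hi
    · simp
    · rw [ih i (by omega) hi]
      simp

theorem gegenbauer_eq_zero_or_gegenbauerCoeff_pos {lam : ℝ} (hlam : 0 ≤ lam) (i : ℕ) :
    gegenbauer lam i = 0 ∨ 0 < gegenbauerCoeff lam i 0 := by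
  rcases hlam.lt_or_eq with hpos | rfl
  · right
    rw [gegenbauerCoeff_zero_right]
    have := ascPochhammer_pos i lam hpos
    positivity
  · rcases i.eq_zero_or_pos with rfl | hi
    · right
      simp [gegenbauerCoeff_zero_right]
    · exact Or.inl (gegenbauer_zero_left hi)

theorem natCast_mul_pow_pred_mul {A : Type*} [CommSemiring A] (m : ℕ) (a : A) :
    (m : A) * a ^ (m - 1) * a = m * a ^ m := by
  cases m with
  | zero => simp
  | succ m => rw [Nat.add_sub_cancel, mul_assoc, ← pow_succ]

namespace MvPolynomial

theorem basisMonomials_coord {σ R : Type*} [CommSemiring R] (α : σ →₀ ℕ) (p : MvPolynomial σ R) :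
    (basisMonomials σ R).coord α p = coeff α p := rfl

variable {σ : Type*} [Fintype σ]

def fischerWeight (α : σ →₀ ℕ) : ℝ := ∏ j, ((α j).factorial : ℝ)

theorem fischerWeight_pos (α : σ →₀ ℕ) : 0 < fischerWeight α :=
  Finset.prod_pos fun j _ => by positivity

theorem fischerWeight_add_single (α : σ →₀ ℕ) (j : σ) :
    fischerWeight (α + Finsupp.single j 1) = ((α j : ℝ) + 1) * fischerWeight α := by
  have hfac : ∀ i, (((α + Finsupp.single j 1 : σ →₀ ℕ) i).factorial : ℝ)
      = (if i = j then (α j : ℝ) + 1 else 1) * ((α i).factorial : ℝ) := by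
    intro i
    rcases eq_or_ne i j with rfl | hij
    · simp [Nat.factorial_succ]
    · simp [hij]
  simp only [fischerWeight, hfac, Finset.prod_mul_distrib, Finset.prod_ite_eq', Finset.mem_univ,
    if_true]

-- On monomials, `fischer (X^α) (X^β) = α! δ_αβ`.
variable (σ) in
def fischer : LinearMap.BilinForm ℝ (MvPolynomial σ ℝ) :=
  (basisMonomials σ ℝ).constr ℝ fun α => fischerWeight α • (basisMonomials σ ℝ).coord α

theorem fischer_apply (p q : MvPolynomial σ ℝ) :
    fischer σ p q = ∑ α ∈ p.support, fischerWeight α * coeff α p * coeff α q := by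
  rw [fischer, Module.Basis.constr_apply, Finsupp.sum, LinearMap.sum_apply]
  refine Finset.sum_congr rfl fun α _ => ?_
  rw [LinearMap.smul_apply, LinearMap.smul_apply, basisMonomials_coord, smul_eq_mul, smul_eq_mul]
  change coeff α p * _ = _
  ring

theorem fischer_monomial_one (α β : σ →₀ ℕ) :
    fischer σ (monomial α 1) (monomial β 1) = if β = α then fischerWeight α else 0 := by
  have h := (basisMonomials σ ℝ).constr_basis ℝ
    (fun α => fischerWeight α • (basisMonomials σ ℝ).coord α) α
  rw [coe_basisMonomials] at h
  rw [fischer, h, LinearMap.smul_apply, basisMonomials_coord, coeff_monomial, smul_eq_mul]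
  split_ifs <;> simp

theorem fischer_self_nonneg (p : MvPolynomial σ ℝ) : 0 ≤ fischer σ p p := by
  rw [fischer_apply]
  exact Finset.sum_nonneg fun α _ => by
    rw [mul_assoc]
    exact mul_nonneg (fischerWeight_pos α).le (mul_self_nonneg _)

theorem fischer_comm (p q : MvPolynomial σ ℝ) : fischer σ p q = fischer σ q p := by
  have h : fischer σ = LinearMap.flip (fischer σ) := by
    refine LinearMap.BilinForm.ext_basis (basisMonomials σ ℝ) fun α β => ?_
    rw [LinearMap.flip_apply, coe_basisMonomials, fischer_monomial_one, fischer_monomial_one]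
    split_ifs <;> simp_all
  exact LinearMap.congr_fun₂ h p q

theorem fischer_X_mul (j : σ) (p q : MvPolynomial σ ℝ) :
    fischer σ (X j * p) q = fischer σ p (pderiv j q) := by
  have h : (fischer σ).compl₁₂ (LinearMap.mulLeft ℝ (X j)) LinearMap.id
      = (fischer σ).compl₁₂ LinearMap.id (pderiv j).toLinearMap := by
    refine LinearMap.BilinForm.ext_basis (basisMonomials σ ℝ) fun α β => ?_
    have hX : (X j : MvPolynomial σ ℝ) * monomial α 1 = monomial (α + Finsupp.single j 1) 1 := by
      rw [← pow_one (X j), ← monomial_single_add, add_comm]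
    simp only [coe_basisMonomials, LinearMap.compl₁₂_apply, LinearMap.mulLeft_apply,
      LinearMap.id_apply, Derivation.coeFn_coe, pderiv_monomial, hX, one_mul]
    rw [← mul_one ((β j : ℕ) : ℝ), ← smul_eq_mul, ← smul_monomial, map_smul,
      fischer_monomial_one, fischer_monomial_one, fischerWeight_add_single]
    split_ifs with h₁ h₂ h₂
    · subst h₁
      simp [add_comm]
    · exact absurd (by rw [h₁, add_tsub_cancel_right]) h₂
    · have hβ : β j = 0 := by
        by_contra hβ
        refine h₁ ?_
        rw [← h₂, tsub_add_cancel_of_le (Finsupp.single_le_iff.2 (Nat.one_le_iff_ne_zero.2 hβ))]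
      simp [hβ]
    · simp
  exact LinearMap.congr_fun₂ h p q

def linForm (x : σ → ℝ) : MvPolynomial σ ℝ := ∑ j, x j • X j

variable (σ) in
def sumSq : MvPolynomial σ ℝ := ∑ j, X j ^ 2

variable (σ) in
def laplacian : MvPolynomial σ ℝ →ₗ[ℝ] MvPolynomial σ ℝ :=
  ∑ j, (pderiv j).toLinearMap ∘ₗ (pderiv j).toLinearMap

theorem laplacian_apply (p : MvPolynomial σ ℝ) :
    laplacian σ p = ∑ j, pderiv j (pderiv j p) := by
  simp [laplacian]

theorem eval_linForm (x y : σ → ℝ) : eval y (linForm x) = x ⬝ᵥ y := by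
  simp [linForm, dotProduct]

theorem eval_sumSq (y : σ → ℝ) : eval y (sumSq σ) = y ⬝ᵥ y := by
  simp [sumSq, dotProduct, sq]

theorem pderiv_linForm (j : σ) (x : σ → ℝ) : pderiv j (linForm x) = C (x j) := by
  simp [linForm, pderiv_X, Pi.single_apply, smul_eq_C_mul]

theorem pderiv_sumSq (j : σ) : pderiv j (sumSq σ) = 2 * X j := by
  simp [sumSq, pderiv_X, Pi.single_apply]

theorem linForm_eq_sum_C_mul_X (x : σ → ℝ) : linForm x = ∑ j, C (x j) * X j := by
  simp [linForm, smul_eq_C_mul]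

theorem pderiv_linForm_pow (j : σ) (x : σ → ℝ) (a : ℕ) :
    pderiv j (linForm x ^ a) = C (a * x j) * linForm x ^ (a - 1) := by
  rw [Derivation.leibniz_pow, pderiv_linForm, smul_eq_mul, nsmul_eq_mul, map_mul, map_natCast]
  ring

theorem pderiv_sumSq_pow (j : σ) (k : ℕ) :
    pderiv j (sumSq σ ^ k) = C (2 * (k : ℝ)) * (X j * sumSq σ ^ (k - 1)) := by
  rw [Derivation.leibniz_pow, pderiv_sumSq, smul_eq_mul, nsmul_eq_mul, map_mul, map_natCast,
    map_ofNat]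
  ring

theorem laplacian_mul (p q : MvPolynomial σ ℝ) :
    laplacian σ (p * q)
      = laplacian σ p * q + 2 * ∑ j, pderiv j p * pderiv j q + p * laplacian σ q := by
  simp only [laplacian_apply, Derivation.leibniz, smul_eq_mul, map_add, Finset.mul_sum,
    Finset.sum_mul, ← Finset.sum_add_distrib]
  exact Finset.sum_congr rfl fun j _ => by ring

theorem laplacian_linForm_pow (x : σ → ℝ) (a : ℕ) :
    laplacian σ (linForm x ^ a) = C (a * (a - 1 : ℕ) * (x ⬝ᵥ x)) * linForm x ^ (a - 2) := by
  simp only [laplacian_apply, pderiv_linForm_pow, pderiv_C_mul, dotProduct, Finset.mul_sum,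
    map_sum, Finset.sum_mul, Nat.sub_sub]
  refine Finset.sum_congr rfl fun j _ => ?_
  simp only [map_mul, map_natCast]
  ring

theorem laplacian_sumSq_pow (k : ℕ) :
    laplacian σ (sumSq σ ^ k)
      = C (2 * (k : ℝ) * (Fintype.card σ + 2 * (k - 1 : ℕ))) * sumSq σ ^ (k - 1) := by
  have hj : ∀ j : σ, pderiv j (pderiv j (sumSq σ ^ k))
      = C (2 * (k : ℝ)) * (sumSq σ ^ (k - 1)
        + C (2 * ((k - 1 : ℕ) : ℝ)) * (X j ^ 2 * sumSq σ ^ (k - 1 - 1))) := by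
    intro j
    rw [pderiv_sumSq_pow, pderiv_C_mul, Derivation.leibniz, pderiv_sumSq_pow, pderiv_X_self]
    simp only [smul_eq_mul]
    ring
  rw [laplacian_apply, Finset.sum_congr rfl fun j _ => hj j, ← Finset.mul_sum,
    Finset.sum_add_distrib, ← Finset.mul_sum, ← Finset.sum_mul, ← sumSq, Finset.sum_const,
    Finset.card_univ, nsmul_eq_mul]
  simp only [map_mul, map_add, map_natCast, map_ofNat]
  linear_combination (2 * 2 * (k : MvPolynomial σ ℝ)) * natCast_mul_pow_pred_mul (k - 1) (sumSq σ)

theorem sum_pderiv_linForm_pow_mul_pderiv_sumSq_pow (x : σ → ℝ) (a k : ℕ) :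
    ∑ j, pderiv j (linForm x ^ a) * pderiv j (sumSq σ ^ k)
      = C (2 * (a : ℝ) * k) * (linForm x ^ a * sumSq σ ^ (k - 1)) := by
  have hterm : ∀ j, pderiv j (linForm x ^ a) * pderiv j (sumSq σ ^ k)
      = C (2 * (k : ℝ)) * sumSq σ ^ (k - 1) * ((a : MvPolynomial σ ℝ) * linForm x ^ (a - 1))
        * (C (x j) * X j) := by
    intro j
    rw [pderiv_linForm_pow, pderiv_sumSq_pow, map_mul, map_natCast]
    ring
  rw [Finset.sum_congr rfl fun j _ => hterm j, ← Finset.mul_sum, ← linForm_eq_sum_C_mul_X,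
    mul_assoc _ _ (linForm x), natCast_mul_pow_pred_mul]
  simp only [map_mul, map_natCast]
  ring

theorem laplacian_linForm_pow_mul_sumSq_pow (x : σ → ℝ) (a k : ℕ) :
    laplacian σ (linForm x ^ a * sumSq σ ^ k)
      = C (a * (a - 1 : ℕ) * (x ⬝ᵥ x)) * (linForm x ^ (a - 2) * sumSq σ ^ k)
        + C (2 * (k : ℝ) * (Fintype.card σ + 2 * (k - 1 : ℕ)) + 4 * a * k)
          * (linForm x ^ a * sumSq σ ^ (k - 1)) := by
  rw [laplacian_mul, laplacian_linForm_pow, laplacian_sumSq_pow,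
    sum_pderiv_linForm_pow_mul_pderiv_sumSq_pow]
  simp only [map_add, map_mul, map_natCast, map_ofNat]
  ring

theorem fischer_C_mul_left (c : ℝ) (p q : MvPolynomial σ ℝ) :
    fischer σ (C c * p) q = c * fischer σ p q := by
  rw [← smul_eq_C_mul, map_smul, LinearMap.smul_apply, smul_eq_mul]

theorem fischer_C_mul_right (c : ℝ) (p q : MvPolynomial σ ℝ) :
    fischer σ p (C c * q) = c * fischer σ p q := by
  rw [← smul_eq_C_mul, map_smul, smul_eq_mul]

theorem fischer_sumSq_mul (p q : MvPolynomial σ ℝ) :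
    fischer σ (sumSq σ * p) q = fischer σ p (laplacian σ q) := by
  simp only [sumSq, Finset.sum_mul, map_sum, LinearMap.sum_apply, laplacian_apply, sq, mul_assoc,
    fischer_X_mul]

theorem fischer_linForm_mul (x : σ → ℝ) (p q : MvPolynomial σ ℝ) :
    fischer σ (linForm x * p) q = ∑ j, x j * fischer σ p (pderiv j q) := by
  simp only [linForm_eq_sum_C_mul_X, Finset.sum_mul, map_sum, LinearMap.sum_apply, mul_assoc,
    fischer_C_mul_left, fischer_X_mul]

theorem fischer_linForm_pow (x y : σ → ℝ) (m : ℕ) :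
    fischer σ (linForm x ^ m) (linForm y ^ m) = m.factorial * (x ⬝ᵥ y) ^ m := by
  induction m with
  | zero =>
    rw [pow_zero, pow_zero, ← C_1, ← monomial_zero', fischer_monomial_one]
    simp [fischerWeight]
  | succ m ih =>
    simp only [pow_succ' (linForm x), fischer_linForm_mul, pderiv_linForm_pow,
      Nat.add_sub_cancel, fischer_C_mul_right, ih]
    have hj : ∀ j, x j * (((m + 1 : ℕ) : ℝ) * y j * (m.factorial * (x ⬝ᵥ y) ^ m))
        = (m + 1 : ℕ) * m.factorial * (x ⬝ᵥ y) ^ m * (x j * y j) := fun j => by ring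
    rw [Finset.sum_congr rfl fun j _ => hj j, ← Finset.mul_sum, ← dotProduct, Nat.factorial_succ]
    push_cast
    ring

theorem fischer_linForm_pow_mul_sumSq_pow (x y : σ → ℝ) (a l : ℕ) :
    fischer σ (linForm x ^ a * sumSq σ ^ l) (linForm y ^ (a + 2 * l))
      = (a + 2 * l).factorial * eval y (linForm x ^ a * sumSq σ ^ l) := by
  induction l with
  | zero => simp [fischer_linForm_pow, eval_linForm]
  | succ l ih =>
    rw [pow_succ', mul_left_comm, fischer_sumSq_mul, show a + 2 * (l + 1) = a + 2 * l + 2 by ring,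
      laplacian_linForm_pow, fischer_C_mul_right, Nat.add_sub_cancel,
      show a + 2 * l + 2 - 1 = a + 2 * l + 1 by omega, ih]
    simp only [map_mul, map_pow, eval_linForm, eval_sumSq, Nat.factorial_succ]
    push_cast
    ring

-- The homogenization `|y|^i C_i(⟨x, y⟩ / |y|)` of the Gegenbauer polynomial.
def zonalHarmonic (i : ℕ) (x : σ → ℝ) : MvPolynomial σ ℝ :=
  ∑ k ∈ Finset.range (i + 1), C (gegenbauerCoeff (Fintype.card σ / 2 - 1) i k)
    * (linForm x ^ (i - 2 * k) * sumSq σ ^ k)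

theorem eval_zonalHarmonic (i : ℕ) (x : σ → ℝ) {y : σ → ℝ} (hy : y ⬝ᵥ y = 1) :
    eval y (zonalHarmonic i x) = (gegenbauer (Fintype.card σ / 2 - 1) i).eval (x ⬝ᵥ y) := by
  simp [zonalHarmonic, eval_linForm, eval_sumSq, hy,
    eval_gegenbauer_eq_sum _ _ (by omega : i < 2 * (i + 1))]

theorem laplacian_C_mul (c : ℝ) (p : MvPolynomial σ ℝ) :
    laplacian σ (C c * p) = C c * laplacian σ p := by
  rw [← smul_eq_C_mul, map_smul, smul_eq_C_mul]

theorem laplacian_zonalHarmonic (i : ℕ) {x : σ → ℝ} (hx : x ⬝ᵥ x = 1) :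
    laplacian σ (zonalHarmonic i x) = 0 := by
  simp only [zonalHarmonic, map_sum, laplacian_C_mul, laplacian_linForm_pow_mul_sumSq_pow, hx,
    mul_one]
  rw [Finset.sum_congr rfl fun k _ => mul_add _ _ _, Finset.sum_add_distrib,
    Finset.sum_range_succ, Finset.sum_range_succ', ← add_assoc,
    add_right_comm _ _ (Finset.sum _ _), ← Finset.sum_add_distrib]
  simp only [tsub_eq_zero_of_le (Nat.le_mul_of_pos_left _ two_pos), Nat.cast_zero, zero_mul,
    mul_zero, map_zero, add_zero]
  refine Finset.sum_eq_zero fun k _ => ?_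
  rw [show i - 2 * k - 2 = i - 2 * (k + 1) by omega, Nat.add_sub_cancel]
  simp only [← mul_assoc, ← map_mul, ← add_mul, ← map_add]
  refine mul_eq_zero_of_left (mul_eq_zero_of_left (C_eq_zero.2 ?_) _) _
  have h := gegenbauerCoeff_harmonic (Fintype.card σ) i k
  push_cast at h ⊢
  linear_combination h

theorem fischer_zonalHarmonic_linForm_pow (i : ℕ) (x y : σ → ℝ) :
    fischer σ (zonalHarmonic i x) (linForm y ^ i) = i.factorial * eval y (zonalHarmonic i x) := by
  simp only [zonalHarmonic, map_sum, LinearMap.sum_apply, fischer_C_mul_left, Finset.mul_sum,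
    map_mul, eval_C]
  refine Finset.sum_congr rfl fun k _ => ?_
  rcases le_or_gt (2 * k) i with hk | hk
  · have h := fischer_linForm_pow_mul_sumSq_pow x y (i - 2 * k) k
    rw [Nat.sub_add_cancel hk] at h
    rw [h, map_mul]
    ring
  · simp [gegenbauerCoeff_of_lt hk]

theorem fischer_zonalHarmonic_zonalHarmonic (i : ℕ) {x y : σ → ℝ} (hx : x ⬝ᵥ x = 1)
    (hy : y ⬝ᵥ y = 1) :
    fischer σ (zonalHarmonic i x) (zonalHarmonic i y)
      = gegenbauerCoeff (Fintype.card σ / 2 - 1) i 0 * i.factorial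
        * (gegenbauer (Fintype.card σ / 2 - 1) i).eval (x ⬝ᵥ y) := by
  have hR : ∀ k, 0 < k →
      fischer σ (zonalHarmonic i x) (linForm y ^ (i - 2 * k) * sumSq σ ^ k) = 0 := by
    intro k hk
    obtain ⟨l, rfl⟩ : ∃ l, k = l + 1 := ⟨k - 1, by omega⟩
    rw [fischer_comm, pow_succ', mul_left_comm, fischer_sumSq_mul, laplacian_zonalHarmonic i hx,
      map_zero]
  rw [zonalHarmonic.eq_1 i y, map_sum, Finset.sum_eq_single_of_mem 0 (by simp) fun k _ hk =>
      by rw [fischer_C_mul_right, hR k (Nat.pos_of_ne_zero hk), mul_zero],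
    fischer_C_mul_right, Nat.mul_zero, Nat.sub_zero, pow_zero, mul_one,
    fischer_zonalHarmonic_linForm_pow, eval_zonalHarmonic i x hy]
  ring

end MvPolynomial

open MvPolynomial in
theorem sum_sum_eval_gegenbauer_dotProduct_nonneg {σ ι : Type*} [Fintype σ]
    (hσ : 2 ≤ Fintype.card σ) (s : Finset ι) (v : ι → σ → ℝ) (hv : ∀ a ∈ s, v a ⬝ᵥ v a = 1)
    (i : ℕ) :
    0 ≤ ∑ a ∈ s, ∑ b ∈ s, (gegenbauer (Fintype.card σ / 2 - 1) i).eval (v a ⬝ᵥ v b) := by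
  have hlam : (0 : ℝ) ≤ Fintype.card σ / 2 - 1 := by
    have : (2 : ℝ) ≤ Fintype.card σ := by exact_mod_cast hσ
    linarith
  rcases gegenbauer_eq_zero_or_gegenbauerCoeff_pos hlam i with h0 | hpos
  · simp [h0]
  have hgram : gegenbauerCoeff (Fintype.card σ / 2 - 1) i 0 * i.factorial
      * ∑ a ∈ s, ∑ b ∈ s, (gegenbauer (Fintype.card σ / 2 - 1) i).eval (v a ⬝ᵥ v b)
      = fischer σ (∑ a ∈ s, zonalHarmonic i (v a)) (∑ b ∈ s, zonalHarmonic i (v b)) := by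
    simp only [map_sum, LinearMap.sum_apply, Finset.mul_sum]
    exact Finset.sum_congr rfl fun a ha => Finset.sum_congr rfl fun b hb => by
      rw [fischer_comm, fischer_zonalHarmonic_zonalHarmonic i (hv a ha) (hv b hb)]
  refine nonneg_of_mul_nonneg_right ?_ (by positivity :
    0 < gegenbauerCoeff (Fintype.card σ / 2 - 1) i 0 * i.factorial)
  rw [hgram]
  exact fischer_self_nonneg _

theorem sum_sum_eval_gegenbauer_inner_nonneg {n : ℕ} (hn : 2 ≤ n)
    (s : Finset (EuclideanSpace ℝ (Fin n))) (hs : ∀ x ∈ s, ‖x‖ = 1) (i : ℕ) :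
    0 ≤ ∑ x ∈ s, ∑ y ∈ s, (gegenbauer ((n : ℝ) / 2 - 1) i).eval (inner ℝ x y) := by
  have h := sum_sum_eval_gegenbauer_dotProduct_nonneg (by simpa using hn) s (fun x => x.ofLp)
    (fun x hx => by
      have h := real_inner_self_eq_norm_sq x
      rw [hs x hx, EuclideanSpace.inner_eq_star_dotProduct] at h
      simpa using h) i
  simpa [EuclideanSpace.inner_eq_star_dotProduct, dotProduct_comm] using h

theorem card_sq_mul_le_sum_sum_gegenbauer_expansion {n : ℕ} (hn : 2 ≤ n)
    (s : Finset (EuclideanSpace ℝ (Fin n))) (hs : ∀ x ∈ s, ‖x‖ = 1) (d : ℕ) (α : ℕ → ℝ)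
    (hα : ∀ i ≤ d, 0 ≤ α i) :
    (s.card : ℝ) ^ 2 * α 0 ≤ ∑ x ∈ s, ∑ y ∈ s, ∑ i ∈ Finset.range (d + 1),
      α i * (gegenbauer ((n : ℝ) / 2 - 1) i).eval (inner ℝ x y) := by
  simp only [Finset.sum_comm (s := s) (t := Finset.range (d + 1)), ← Finset.mul_sum]
  have h0 : ∑ x ∈ s, ∑ y ∈ s, (gegenbauer ((n : ℝ) / 2 - 1) 0).eval (inner ℝ x y)
      = (s.card : ℝ) ^ 2 := by
    simp [gegenbauer, sq]
  rw [← h0, mul_comm]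
  exact Finset.single_le_sum
    (f := fun i => α i * ∑ x ∈ s, ∑ y ∈ s, (gegenbauer ((n : ℝ) / 2 - 1) i).eval (inner ℝ x y))
    (fun i hi => mul_nonneg (hα i (Nat.lt_succ_iff.1 (Finset.mem_range.1 hi)))
      (sum_sum_eval_gegenbauer_inner_nonneg hn s hs i))
    (Finset.mem_range.2 d.succ_pos)

/-- Linear programming bound for potential energy on the sphere: if `h(t) ≤ f(2-2t)` on
`[-1,1)` and `h = ∑ αᵢ C_i^{n/2-1}` with `αᵢ ≥ 0`, then any `N` points on `S^{n-1}` have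
`f`-potential energy at least `N² α₀ - N h(1)`. -/
theorem stmt_11 (n : ℕ) (hn : 2 ≤ n) (f : ℝ → ℝ) (d : ℕ) (α : ℕ → ℝ)
    (hα : ∀ i ≤ d, 0 ≤ α i) (h : ℝ → ℝ)
    (hexp : ∀ t : ℝ, h t =
      ∑ i ∈ Finset.range (d + 1), α i * (gegenbauer ((n : ℝ) / 2 - 1) i).eval t)
    (hbound : ∀ t ∈ Set.Ico (-1 : ℝ) 1, h t ≤ f (2 - 2 * t))
    (C : Finset (EuclideanSpace ℝ (Fin n))) (hC : ∀ x ∈ C, ‖x‖ = 1)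
    (N : ℕ) (hN : C.card = N) :
    (N : ℝ) ^ 2 * α 0 - N * h 1 ≤ ∑ x ∈ C, ∑ y ∈ C.erase x, f (‖x - y‖ ^ 2) := by
  have hlow := card_sq_mul_le_sum_sum_gegenbauer_expansion hn C hC d α hα
  simp only [← hexp, hN] at hlow
  have hdiag : ∑ x ∈ C, ∑ y ∈ C, h (inner ℝ x y)
      = N * h 1 + ∑ x ∈ C, ∑ y ∈ C.erase x, h (inner ℝ x y) := by
    rw [← hN, ← nsmul_eq_mul, ← Finset.sum_const, ← Finset.sum_add_distrib]
    refine Finset.sum_congr rfl fun x hx => ?_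
    rw [← Finset.add_sum_erase _ _ hx, real_inner_self_eq_norm_sq, hC x hx, one_pow]
  have hoff : ∑ x ∈ C, ∑ y ∈ C.erase x, h (inner ℝ x y)
      ≤ ∑ x ∈ C, ∑ y ∈ C.erase x, f (‖x - y‖ ^ 2) := by
    refine Finset.sum_le_sum fun x hx => Finset.sum_le_sum fun y hy => ?_
    obtain ⟨hyx, hy⟩ := Finset.mem_erase.1 hy
    rw [norm_sub_sq_real, hC x hx, hC y hy, show (1 : ℝ) ^ 2 - 2 * inner ℝ x y + 1 ^ 2
      = 2 - 2 * inner ℝ x y by ring]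
    exact hbound _ ⟨neg_one_le_real_inner_of_norm_eq_one (hC x hx) (hC y hy),
      (inner_lt_one_iff_real_of_norm_eq_one (hC x hx) (hC y hy)).2 hyx.symm⟩
  linarith
end
end

section
/- (Universal optimality of the simplex) Let n ≥ 1, 2 ≤ N ≤ n+1, and let f : (0,4] → ℝ be decreasing and convex. For any set C' of N points on the unit sphere S^{n−1} ⊂ ℝⁿ, the f-potential energy ∑_{x,y∈C', x≠y} f(|x−y|²) is at least N(N−1) f(2 + 2/(N−1)), with equality attained by the regular simplex (all pairwise inner products equal to −1/(N−1)). Moreover, if f is strictly convex, equality holds only when all pairwise squared distances in C' equal 2 + 2/(N−1). -/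
open Classical
open scoped RealInnerProductSpace
noncomputable section

/-!
Jensen's inequality over the `N(N-1)` ordered pairs bounds the energy below by `N(N-1)` times `f`
of the mean squared distance. For unit vectors `∑_{x,y} |x-y|² = 2N² - 2|∑ x|² ≤ 2N²`, so that mean
is at most `2N²/(N(N-1)) = 2 + 2/(N-1)`, and `f` is decreasing. If `f` is strictly convex, equality
in Jensen makes all squared distances equal to their mean, and since a strictly convex decreasing
function is strictly decreasing, that mean must be `2 + 2/(N-1)`.
-/

open Finset

theorem Finset.sum_sum_erase_eq_sum_offDiag {α β : Type*} [DecidableEq α] [AddCommMonoid β]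
    (s : Finset α) (g : α → α → β) :
    ∑ x ∈ s, ∑ y ∈ s.erase x, g x y = ∑ q ∈ s.offDiag, g q.1 q.2 :=
  (sum_finset_product s.offDiag s (s.erase ·) (f := fun q => g q.1 q.2) fun q => by
    rw [mem_offDiag, mem_erase]; tauto).symm

theorem Finset.cast_card_offDiag {R α : Type*} [CommRing R] [DecidableEq α] (s : Finset α) :
    (#s.offDiag : R) = #s * (#s - 1) := by
  rw [offDiag_card, Nat.cast_sub (Nat.le_mul_self _)]
  push_cast; ring

theorem StrictConvexOn.strictAntiOn_of_antitoneOn {s : Set ℝ} {f : ℝ → ℝ}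
    (hf : StrictConvexOn ℝ s f) (hanti : AntitoneOn f s) : StrictAntiOn f s := by
  intro x hx y hy hxy
  refine (hanti hx hy hxy.le).lt_of_ne fun hfxy => ?_
  have hmid := hf.2 hx hy hxy.ne one_half_pos one_half_pos (add_halves 1)
  have hle := hanti (hf.1 hx hy one_half_pos.le one_half_pos.le (add_halves 1)) hy
    (by simp only [smul_eq_mul]; linarith)
  simp only [smul_eq_mul] at hmid hle
  linarith

section Jensen

variable {ι : Type*} {s : Set ℝ} {f : ℝ → ℝ} {t : Finset ι} {p : ι → ℝ} {a : ℝ}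

theorem sum_inv_card_smul_eq (g : ι → ℝ) :
    ∑ i ∈ t, (#t : ℝ)⁻¹ • g i = (∑ i ∈ t, g i) / #t := by
  rw [← smul_sum, smul_eq_mul, inv_mul_eq_div]

theorem sum_inv_card_eq_one (ht : t.Nonempty) : ∑ _i ∈ t, (#t : ℝ)⁻¹ = 1 := by
  rw [sum_const, nsmul_eq_mul, mul_inv_cancel₀ (by simp [ht.ne_empty])]

theorem ConvexOn.card_mul_le_sum_of_antitoneOn (hf : ConvexOn ℝ s f) (hanti : AntitoneOn f s)
    (hp : ∀ i ∈ t, p i ∈ s) (ha : a ∈ s) (hsum : ∑ i ∈ t, p i ≤ #t * a) :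
    #t * f a ≤ ∑ i ∈ t, f (p i) := by
  rcases t.eq_empty_or_nonempty with rfl | ht
  · simp
  have hw : ∀ i ∈ t, (0 : ℝ) ≤ (#t : ℝ)⁻¹ := fun _ _ => by positivity
  have hcard : (0 : ℝ) < #t := by simpa using ht.card_pos
  have hmean_mem := hf.1.sum_mem hw (sum_inv_card_eq_one ht) hp
  have hjensen := hf.map_sum_le hw (sum_inv_card_eq_one ht) hp
  simp only [sum_inv_card_smul_eq] at hmean_mem hjensen
  have hmean_le : (∑ i ∈ t, p i) / #t ≤ a := (div_le_iff₀' hcard).2 hsum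
  rw [← le_div_iff₀' hcard]
  exact (hanti hmean_mem ha hmean_le).trans hjensen

theorem StrictConvexOn.eq_of_card_mul_eq_sum_of_antitoneOn (hf : StrictConvexOn ℝ s f)
    (hanti : AntitoneOn f s) (hp : ∀ i ∈ t, p i ∈ s) (ha : a ∈ s)
    (hsum : ∑ i ∈ t, p i ≤ #t * a) (heq : ∑ i ∈ t, f (p i) = #t * f a) :
    ∀ i ∈ t, p i = a := by
  rcases t.eq_empty_or_nonempty with rfl | ht
  · simp
  have hw : ∀ i ∈ t, (0 : ℝ) < (#t : ℝ)⁻¹ := fun _ _ => by simpa using ht.card_pos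
  have hcard : (0 : ℝ) < #t := by simpa using ht.card_pos
  have hmean_mem := hf.1.sum_mem (fun i hi => (hw i hi).le) (sum_inv_card_eq_one ht) hp
  have hjensen := hf.convexOn.map_sum_le (fun i hi => (hw i hi).le) (sum_inv_card_eq_one ht) hp
  have hconst := (hf.map_sum_eq_iff hw (sum_inv_card_eq_one ht) hp).1
  have havg : (∑ i ∈ t, f (p i)) / #t = f a := by rw [heq, mul_div_cancel_left₀ _ hcard.ne']
  simp only [sum_inv_card_smul_eq, havg] at hmean_mem hjensen hconst
  have hmean_le : (∑ i ∈ t, p i) / #t ≤ a := (div_le_iff₀' hcard).2 hsum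
  have hmean_eq : (∑ i ∈ t, p i) / #t = a := by
    by_contra hne
    exact hjensen.not_gt
      (hf.strictAntiOn_of_antitoneOn hanti hmean_mem ha (hmean_le.lt_of_ne hne))
  rw [hmean_eq] at hconst
  exact hconst rfl

end Jensen

theorem two_add_two_div_sub_one_mem_Ioc {N : ℝ} (hN : 2 ≤ N) :
    2 + 2 / (N - 1) ∈ Set.Ioc 0 4 := by
  have : 2 / (N - 1) ≤ 2 := div_le_self zero_le_two (by linarith)
  exact ⟨by positivity [show 0 < N - 1 by linarith], by linarith⟩

theorem norm_sub_sq_mem_Ioc {E : Type*} [NormedAddCommGroup E] {x y : E} (hx : ‖x‖ = 1)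
    (hy : ‖y‖ = 1) (hxy : x ≠ y) :
    ‖x - y‖ ^ 2 ∈ Set.Ioc 0 4 := by
  refine ⟨by positivity [sub_ne_zero.2 hxy], ?_⟩
  have : ‖x - y‖ ≤ 2 := (norm_sub_le x y).trans (by rw [hx, hy]; norm_num)
  nlinarith [norm_nonneg (x - y)]

section PotentialEnergy

variable {E : Type*} [NormedAddCommGroup E] [DecidableEq E] (f : ℝ → ℝ) (s : Finset E)

def potentialEnergy : ℝ := ∑ x ∈ s, ∑ y ∈ s.erase x, f (‖x - y‖ ^ 2)

theorem potentialEnergy_eq_sum_offDiag :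
    potentialEnergy f s = ∑ q ∈ s.offDiag, f (‖q.1 - q.2‖ ^ 2) :=
  sum_sum_erase_eq_sum_offDiag s fun x y => f (‖x - y‖ ^ 2)

theorem potentialEnergy_eq_of_norm_sub_sq_eq {d : ℝ}
    (hd : ∀ x ∈ s, ∀ y ∈ s, x ≠ y → ‖x - y‖ ^ 2 = d) :
    potentialEnergy f s = #s * (#s - 1) * f d := by
  have hconst : ∀ q ∈ s.offDiag, f (‖q.1 - q.2‖ ^ 2) = f d := fun q hq => by
    obtain ⟨hx, hy, hxy⟩ := mem_offDiag.1 hq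
    rw [hd _ hx _ hy hxy]
  rw [potentialEnergy_eq_sum_offDiag, sum_congr rfl hconst, sum_const, nsmul_eq_mul,
    cast_card_offDiag]

end PotentialEnergy

section Sphere

variable {E : Type*} [NormedAddCommGroup E] [InnerProductSpace ℝ E]

theorem sum_sum_norm_sub_sq (s : Finset E) :
    ∑ x ∈ s, ∑ y ∈ s, ‖x - y‖ ^ 2 = 2 * #s * ∑ x ∈ s, ‖x‖ ^ 2 - 2 * ‖∑ x ∈ s, x‖ ^ 2 := by
  have h : ‖∑ x ∈ s, x‖ ^ 2 = ∑ x ∈ s, ∑ y ∈ s, ⟪x, y⟫ := by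
    rw [← real_inner_self_eq_norm_sq, sum_inner]; simp_rw [inner_sum]
  simp only [norm_sub_sq_real, sum_add_distrib, sum_sub_distrib, ← mul_sum, sum_const,
    nsmul_eq_mul, h]
  ring

variable [DecidableEq E] {f : ℝ → ℝ} {s : Finset E}

theorem sum_offDiag_norm_sub_sq_le (hs : ∀ x ∈ s, ‖x‖ = 1) :
    ∑ q ∈ s.offDiag, ‖q.1 - q.2‖ ^ 2 ≤ 2 * #s ^ 2 := by
  have hnorm : ∑ x ∈ s, ‖x‖ ^ 2 = #s := by simp +contextual [hs]
  rw [← sum_sum_erase_eq_sum_offDiag s fun x y => ‖x - y‖ ^ 2]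
  simp only [fun x => sum_erase s (f := fun y => ‖x - y‖ ^ 2) (a := x) (by simp),
    sum_sum_norm_sub_sq, hnorm]
  nlinarith [sq_nonneg ‖∑ x ∈ s, x‖]

theorem sum_offDiag_norm_sub_sq_le_card_offDiag_mul (hcard : 2 ≤ #s)
    (hs : ∀ x ∈ s, ‖x‖ = 1) :
    ∑ q ∈ s.offDiag, ‖q.1 - q.2‖ ^ 2 ≤ #s.offDiag * (2 + 2 / (#s - 1)) := by
  have hN : (#s : ℝ) - 1 ≠ 0 := by
    have : (2 : ℝ) ≤ #s := by exact_mod_cast hcard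
    linarith
  convert sum_offDiag_norm_sub_sq_le hs using 1
  rw [cast_card_offDiag]
  field_simp
  ring

theorem card_mul_le_potentialEnergy (hanti : AntitoneOn f (Set.Ioc 0 4))
    (hconv : ConvexOn ℝ (Set.Ioc 0 4) f) (hcard : 2 ≤ #s) (hs : ∀ x ∈ s, ‖x‖ = 1) :
    #s * (#s - 1) * f (2 + 2 / (#s - 1)) ≤ potentialEnergy f s := by
  rw [potentialEnergy_eq_sum_offDiag, ← cast_card_offDiag]
  refine hconv.card_mul_le_sum_of_antitoneOn hanti (fun q hq => ?_)
    (two_add_two_div_sub_one_mem_Ioc (by exact_mod_cast hcard))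
    (sum_offDiag_norm_sub_sq_le_card_offDiag_mul hcard hs)
  obtain ⟨hx, hy, hxy⟩ := mem_offDiag.1 hq
  exact norm_sub_sq_mem_Ioc (hs _ hx) (hs _ hy) hxy

theorem norm_sub_sq_eq_of_potentialEnergy_eq (hanti : AntitoneOn f (Set.Ioc 0 4))
    (hconv : StrictConvexOn ℝ (Set.Ioc 0 4) f) (hcard : 2 ≤ #s) (hs : ∀ x ∈ s, ‖x‖ = 1)
    (heq : potentialEnergy f s = #s * (#s - 1) * f (2 + 2 / (#s - 1))) :
    ∀ x ∈ s, ∀ y ∈ s, x ≠ y → ‖x - y‖ ^ 2 = 2 + 2 / (#s - 1) := by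
  rw [potentialEnergy_eq_sum_offDiag, ← cast_card_offDiag] at heq
  have hp : ∀ q ∈ s.offDiag, ‖q.1 - q.2‖ ^ 2 ∈ Set.Ioc 0 4 := fun q hq => by
    obtain ⟨hx, hy, hxy⟩ := mem_offDiag.1 hq
    exact norm_sub_sq_mem_Ioc (hs _ hx) (hs _ hy) hxy
  have := hconv.eq_of_card_mul_eq_sum_of_antitoneOn hanti hp
    (two_add_two_div_sub_one_mem_Ioc (by exact_mod_cast hcard))
    (sum_offDiag_norm_sub_sq_le_card_offDiag_mul hcard hs) heq
  exact fun x hx y hy hxy => this (x, y) (mem_offDiag.2 ⟨hx, hy, hxy⟩)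

end Sphere

theorem stmt_13_general (n N : ℕ) (hN2 : 2 ≤ N)
    (f : ℝ → ℝ) (hdec : AntitoneOn f (Set.Ioc 0 4)) (hconv : ConvexOn ℝ (Set.Ioc 0 4) f) :
    (∀ C' : Finset (EuclideanSpace ℝ (Fin n)), C'.card = N → (∀ x ∈ C', ‖x‖ = 1) →
      (N : ℝ) * ((N : ℝ) - 1) * f (2 + 2 / ((N : ℝ) - 1)) ≤
        ∑ x ∈ C', ∑ y ∈ C'.erase x, f (‖x - y‖ ^ 2)) ∧
    (∀ C : Finset (EuclideanSpace ℝ (Fin n)), C.card = N → (∀ x ∈ C, ‖x‖ = 1) →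
      (∀ x ∈ C, ∀ y ∈ C, x ≠ y → ⟪x, y⟫ = -1 / ((N : ℝ) - 1)) →
      ∑ x ∈ C, ∑ y ∈ C.erase x, f (‖x - y‖ ^ 2) =
        (N : ℝ) * ((N : ℝ) - 1) * f (2 + 2 / ((N : ℝ) - 1))) ∧
    (StrictConvexOn ℝ (Set.Ioc 0 4) f →
      ∀ C' : Finset (EuclideanSpace ℝ (Fin n)), C'.card = N → (∀ x ∈ C', ‖x‖ = 1) →
      ∑ x ∈ C', ∑ y ∈ C'.erase x, f (‖x - y‖ ^ 2) =
        (N : ℝ) * ((N : ℝ) - 1) * f (2 + 2 / ((N : ℝ) - 1)) →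
      ∀ x ∈ C', ∀ y ∈ C', x ≠ y → ‖x - y‖ ^ 2 = 2 + 2 / ((N : ℝ) - 1)) := by
  refine ⟨fun C hcard hunit => ?_, fun C hcard hunit hinner => ?_,
    fun hstrict C hcard hunit heq => ?_⟩ <;> subst hcard
  · exact card_mul_le_potentialEnergy hdec hconv hN2 hunit
  · refine potentialEnergy_eq_of_norm_sub_sq_eq f C fun x hx y hy hxy => ?_
    rw [norm_sub_sq_real, hunit x hx, hunit y hy, hinner x hx y hy hxy]
    ring
  · exact norm_sub_sq_eq_of_potentialEnergy_eq hdec hstrict hN2 hunit heq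

/-- Universal optimality of the regular simplex: for `2 ≤ N ≤ n+1` and `f` decreasing and
convex on `(0,4]`, any `N` points on `S^{n-1}` have `f`-potential energy at least
`N(N-1) f(2 + 2/(N-1))`; equality holds for the regular simplex, and if `f` is strictly
convex, equality forces all pairwise squared distances to equal `2 + 2/(N-1)`. -/
theorem stmt_13 (n N : ℕ) (hn : 1 ≤ n) (hN2 : 2 ≤ N) (hNn : N ≤ n + 1)
    (f : ℝ → ℝ) (hdec : AntitoneOn f (Set.Ioc 0 4)) (hconv : ConvexOn ℝ (Set.Ioc 0 4) f) :
    (∀ C' : Finset (EuclideanSpace ℝ (Fin n)), C'.card = N → (∀ x ∈ C', ‖x‖ = 1) →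
      (N : ℝ) * ((N : ℝ) - 1) * f (2 + 2 / ((N : ℝ) - 1)) ≤
        ∑ x ∈ C', ∑ y ∈ C'.erase x, f (‖x - y‖ ^ 2)) ∧
    (∀ C : Finset (EuclideanSpace ℝ (Fin n)), C.card = N → (∀ x ∈ C, ‖x‖ = 1) →
      (∀ x ∈ C, ∀ y ∈ C, x ≠ y → ⟪x, y⟫ = -1 / ((N : ℝ) - 1)) →
      ∑ x ∈ C, ∑ y ∈ C.erase x, f (‖x - y‖ ^ 2) =
        (N : ℝ) * ((N : ℝ) - 1) * f (2 + 2 / ((N : ℝ) - 1))) ∧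
    (StrictConvexOn ℝ (Set.Ioc 0 4) f →
      ∀ C' : Finset (EuclideanSpace ℝ (Fin n)), C'.card = N → (∀ x ∈ C', ‖x‖ = 1) →
      ∑ x ∈ C', ∑ y ∈ C'.erase x, f (‖x - y‖ ^ 2) =
        (N : ℝ) * ((N : ℝ) - 1) * f (2 + 2 / ((N : ℝ) - 1)) →
      ∀ x ∈ C', ∀ y ∈ C', x ≠ y → ‖x - y‖ ^ 2 = 2 + 2 / ((N : ℝ) - 1)) :=
  stmt_13_general n N hN2 f hdec hconv

end
end
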